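/- arXiv:2011.03393 — 8 statements merged into one kernel-verified Lean document; each statement's English description precedes it below -/
import Mathlib

section
/- Let A,B>0, an equilibrium ρ*≥0, a feedback parameter k∈[0,1), R>0 and a bounded measurement error d:[0,∞)→ℝ be given. Set θ=ρ*/(B+ρ*) and C₁(β)=(e^β−1)/β. Assume there exists β>0 such that e^{−β}>2k, θ(e^{−β}−2k)C₁(β)/(1−k)<1, and β − θ²C₁(β)[(2−e^{−β}) + ((2k−e^{−β})/(1−k))²] > 0. Let ρ∈C¹([0,∞)×[0,1]) be a nonnegative classical solution of ∂_tρ(t,x)+λ(W(t))∂_xρ(t,x)=0 with λ(s)=A/(B+s), W(t)=∫₀¹ρ(t,x)dx, satisfying the feedback boundary condition ρ(t,0)λ(W(t)) = ρ*λ(ρ*) + k((ρ(t,1)+d(t))λ(W(t)) − ρ*λ(ρ*)) for all t>0 and the initial bound ‖ρ(0,·)−ρ*‖_{L²(0,1)} ≤ R. Then there exist positive constants γ₁,γ₂,γ₃ (depending only on A,B,ρ*,k,β,R and sup_{t≥0}|d(t)|) such that for all t≥0: ‖ρ(t,·)−ρ*‖_{L²(0,1)} ≤ γ₂e^{−γ₁t}‖ρ(0,·)−ρ*‖_{L²(0,1)}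 + γ₃·sup_{s∈[0,t]}|d(s)|. -/
/-!
The Lyapunov functional `V(t) = ∫₀¹ e^{-βx} (ρ(t,x) - ρ*)² dx` is differentiable along classical
solutions, and integrating by parts turns the transport equation into
`V' = λ(W) ((ρ(t,0) - ρ*)² - e^{-β} (ρ(t,1) - ρ*)² - β V)`.
The boundary feedback writes `ρ(t,0) - ρ*` as `k (ρ(t,1) - ρ*) + (1 - k) θ (W - ρ*) + k d`, and
Cauchy–Schwarz gives `(W - ρ*)² ≤ C₁(β) V`; maximising the resulting quadratic form in
`ρ(t,1) - ρ*` and using the hypothesis on `β` yields `V' ≤ λ(W) (-c V + C d²)`. First `V` stays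
bounded, which bounds `W` and hence `λ(W)` away from `0`; then Grönwall gives exponential decay of
`V` up to a multiple of `sup |d|²`. Since `e^{-β} ∫ f² ≤ ∫ e^{-βx} f² ≤ ∫ f²`, the estimate
transfers to the `L²` norm.
-/

open Real Set MeasureTheory Filter Topology Function

theorem add_sq_le_one_add_mul_sq_add (x y : ℝ) {s : ℝ} (hs : 0 < s) :
    (x + y) ^ 2 ≤ (1 + s) * x ^ 2 + (1 + 1 / s) * y ^ 2 := by
  have key : 0 ≤ (s * x - y) ^ 2 / s := by positivity
  have expand : (1 + s) * x ^ 2 + (1 + 1 / s) * y ^ 2 - (x + y) ^ 2 = (s * x - y) ^ 2 / s := by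
    field_simp
    ring
  linarith

/-- The maximum over `u` of `(k u + v)² - E u²` is attained at `u = k v / (E - k²)`. -/
theorem mul_add_sq_sub_mul_sq_le {E k : ℝ} (hkE : k ^ 2 < E) (u v : ℝ) :
    (k * u + v) ^ 2 - E * u ^ 2 ≤ E / (E - k ^ 2) * v ^ 2 := by
  have hpos : 0 < E - k ^ 2 := by linarith
  rw [div_mul_eq_mul_div, le_div_iff₀ hpos]
  nlinarith [sq_nonneg ((E - k ^ 2) * u - k * v)]

theorem exists_boundary_dissipation {E k θ C₁ β : ℝ} (hk : 0 ≤ k) (hkE : 2 * k < E)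
    (hE : E < 1) (hC₁ : 0 < C₁) (hβ : θ ^ 2 * C₁ * (2 - E) < β) :
    ∃ c > 0, ∃ C > 0, ∀ u w δ V : ℝ, 0 ≤ V → w ^ 2 ≤ C₁ * V →
      (k * u + ((1 - k) * θ * w + k * δ)) ^ 2 - E * u ^ 2 ≤ (β - c) * V + C * δ ^ 2 := by
  have hk2E : k ^ 2 < E := by nlinarith
  have hgap : 0 < E - k ^ 2 := by linarith
  set κ := E / (E - k ^ 2)
  have hκ : 0 ≤ κ := div_nonneg (by linarith) hgap.le
  set P := κ * (1 - k) ^ 2 * (θ ^ 2 * C₁)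
  have hP : 0 ≤ P := by positivity
  have hPβ : P < β := by
    have hκ2 : κ * (1 - k) ^ 2 ≤ 2 - E := by
      rw [div_mul_eq_mul_div, div_le_iff₀ hgap]
      nlinarith [mul_nonneg hk (by linarith : 0 ≤ E - k),
        mul_pos (by linarith : 0 < E) (by linarith : 0 < 1 - E)]
    calc P ≤ (2 - E) * (θ ^ 2 * C₁) := mul_le_mul_of_nonneg_right hκ2 (by positivity)
      _ < β := by linarith
  -- half of the gap `β - P` is the decay rate, the other half absorbs Young's inequality
  set c := (β - P) / 2 with hc_def
  have hc : 0 < c := by linarith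
  set s := c / (P + 1)
  have hs : 0 < s := by positivity
  have hsP : (1 + s) * P ≤ β - c := by
    have : s * P ≤ c := by
      calc s * P ≤ s * (P + 1) := by nlinarith
        _ = c := div_mul_cancel₀ c (by linarith)
    linarith
  refine ⟨c, hc, κ * (1 + 1 / s) * k ^ 2 + 1, by positivity, fun u w δ V hV hw => ?_⟩
  have hθw : ((1 - k) * θ * w) ^ 2 ≤ (1 - k) ^ 2 * θ ^ 2 * (C₁ * V) := by
    rw [mul_pow, mul_pow]
    exact mul_le_mul_of_nonneg_left hw (by positivity)
  calc (k * u + ((1 - k) * θ * w + k * δ)) ^ 2 - E * u ^ 2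
      ≤ κ * ((1 - k) * θ * w + k * δ) ^ 2 := mul_add_sq_sub_mul_sq_le hk2E _ _
    _ ≤ κ * ((1 + s) * ((1 - k) ^ 2 * θ ^ 2 * (C₁ * V)) + (1 + 1 / s) * (k * δ) ^ 2) := by
      gcongr
      exact (add_sq_le_one_add_mul_sq_add _ _ hs).trans (by gcongr)
    _ = (1 + s) * P * V + κ * (1 + 1 / s) * k ^ 2 * δ ^ 2 := by ring
    _ ≤ (β - c) * V + (κ * (1 + 1 / s) * k ^ 2 + 1) * δ ^ 2 := by
      nlinarith [mul_le_mul_of_nonneg_right hsP hV, sq_nonneg δ]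

theorem boundary_deviation_eq {A B ρs k W ρ₀ ρ₁ δ : ℝ} (hA : A ≠ 0) (hBρ : B + ρs ≠ 0)
    (hBW : B + W ≠ 0)
    (h : ρ₀ * (A / (B + W)) =
      ρs * (A / (B + ρs)) + k * ((ρ₁ + δ) * (A / (B + W)) - ρs * (A / (B + ρs)))) :
    ρ₀ - ρs = k * (ρ₁ - ρs) + ((1 - k) * (ρs / (B + ρs)) * (W - ρs) + k * δ) := by
  field_simp at h ⊢
  linear_combination h

theorem sqrt_le_mul_sqrt_add_mul {X Y D p q : ℝ} (hY : 0 ≤ Y) (hp : 0 ≤ p) (hq : 0 ≤ q)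
    (hD : 0 ≤ D) (h : X ≤ p ^ 2 * Y + q ^ 2 * D ^ 2) : √X ≤ p * √Y + q * D := by
  rw [sqrt_le_left (by positivity)]
  nlinarith [sq_sqrt hY, mul_nonneg (mul_nonneg hp (sqrt_nonneg Y)) (mul_nonneg hq hD)]

theorem le_of_hasDerivAt_nonpos_of_lt {f f' : ℝ → ℝ} {a M : ℝ} (hf : ContinuousOn f (Ici a))
    (hf' : ∀ t > a, HasDerivAt f (f' t) t) (ha : f a ≤ M)
    (hneg : ∀ t > a, M < f t → f' t ≤ 0) {t : ℝ} (ht : a ≤ t) : f t ≤ M := by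
  by_contra! hMt
  set S := {s ∈ Icc a t | f s ≤ M}
  have hS : IsClosed S :=
    (hf.mono Icc_subset_Ici_self).preimage_isClosed_of_isClosed isClosed_Icc isClosed_Iic
  have hSne : S.Nonempty := ⟨a, ⟨le_rfl, ht⟩, ha⟩
  have hSbdd : BddAbove S := ⟨t, fun s hs => hs.1.2⟩
  obtain ⟨⟨haT, hTt⟩, hfT⟩ : sSup S ∈ S := hS.csSup_mem hSne hSbdd
  -- past the last time `T` at which `f ≤ M`, the function cannot increase
  set T := sSup S
  have habove : ∀ s ∈ Ioc T t, M < f s := fun s hs => by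
    by_contra! hs'
    exact (le_csSup hSbdd ⟨⟨haT.trans hs.1.le, hs.2⟩, hs'⟩).not_gt hs.1
  have hanti : AntitoneOn f (Icc T t) := by
    refine antitoneOn_of_deriv_nonpos (convex_Icc T t)
      (hf.mono fun s hs => haT.trans hs.1) (fun s hs => ?_) fun s hs => ?_ <;>
      rw [interior_Icc] at hs
    · exact (hf' s (haT.trans_lt hs.1)).differentiableAt.differentiableWithinAt
    · rw [(hf' s (haT.trans_lt hs.1)).deriv]
      exact hneg s (haT.trans_lt hs.1) (habove s ⟨hs.1, hs.2.le⟩)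
  exact hMt.not_ge ((hanti ⟨le_rfl, hTt⟩ ⟨hTt, le_rfl⟩ hTt).trans hfT)

theorem le_sub_mul_exp_add_of_deriv_le {f f' : ℝ → ℝ} {a K t : ℝ} (ht : 0 ≤ t)
    (hf : ContinuousOn f (Icc 0 t)) (hf' : ∀ s ∈ Ioo 0 t, HasDerivAt f (f' s) s)
    (hle : ∀ s ∈ Ioo 0 t, f' s ≤ -a * (f s - K)) :
    f t ≤ (f 0 - K) * exp (-(a * t)) + K := by
  have hderiv : ∀ s ∈ Ioo 0 t, HasDerivAt (fun s => (f s - K) * exp (a * s))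
      (f' s * exp (a * s) + (f s - K) * (exp (a * s) * (a * 1))) s := fun s hs =>
    ((hf' s hs).sub_const K).mul ((hasDerivAt_id s).const_mul a).exp
  have hanti : AntitoneOn (fun s => (f s - K) * exp (a * s)) (Icc 0 t) := by
    refine antitoneOn_of_deriv_nonpos (convex_Icc 0 t) (by fun_prop) (fun s hs => ?_)
      fun s hs => ?_ <;> rw [interior_Icc] at hs
    · exact (hderiv s hs).differentiableAt.differentiableWithinAt
    · rw [(hderiv s hs).deriv]
      nlinarith [hle s hs, exp_pos (a * s)]
  have h := hanti ⟨le_rfl, ht⟩ ⟨ht, le_rfl⟩ ht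
  simp only [mul_zero, exp_zero, mul_one] at h
  have hexp : exp (a * t) * exp (-(a * t)) = 1 := by rw [← exp_add]; simp
  calc f t = (f t - K) * exp (a * t) * exp (-(a * t)) + K := by rw [mul_assoc, hexp]; ring
    _ ≤ (f 0 - K) * exp (-(a * t)) + K := by gcongr

theorem abs_le_sSup_image_abs {d : ℝ → ℝ} {M t s : ℝ} (hd : ∀ t ≥ 0, |d t| ≤ M)
    (hs : s ∈ Icc 0 t) : |d s| ≤ sSup ((fun s => |d s|) '' Icc 0 t) :=
  le_csSup ⟨M, by rintro _ ⟨r, hr, rfl⟩; exact hd r hr.1⟩ (mem_image_of_mem _ hs)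

theorem le_add_div_of_dissipation {V V' lam d : ℝ → ℝ} {c C M : ℝ} (hc : 0 < c) (hC : 0 ≤ C)
    (hV : ContinuousOn V (Ici 0)) (hV₀ : 0 ≤ V 0) (hV' : ∀ t > 0, HasDerivAt V (V' t) t)
    (hdiss : ∀ t > 0, V' t ≤ lam t * (-c * V t + C * d t ^ 2)) (hlam : ∀ t > 0, 0 ≤ lam t)
    (hd : ∀ t ≥ 0, |d t| ≤ M) {t : ℝ} (ht : 0 ≤ t) : V t ≤ V 0 + C * M ^ 2 / c := by
  have hCM : c * (C * M ^ 2 / c) = C * M ^ 2 := mul_div_cancel₀ _ hc.ne'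
  refine le_of_hasDerivAt_nonpos_of_lt hV hV'
    (by linarith [div_nonneg (mul_nonneg hC (sq_nonneg M)) hc.le])
    (fun s hs hVs => (hdiss s hs).trans (mul_nonpos_of_nonneg_of_nonpos (hlam s hs) ?_)) ht
  have hdM : d s ^ 2 ≤ M ^ 2 := sq_le_sq' (abs_le.mp (hd s hs.le)).1 (abs_le.mp (hd s hs.le)).2
  nlinarith [mul_le_mul_of_nonneg_left hdM hC]

theorem exists_decay_of_dissipation {V V' lam d : ℝ → ℝ} {c C Λ M : ℝ} (hc : 0 < c) (hC : 0 < C)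
    (hV : ContinuousOn V (Ici 0)) (hV_nonneg : ∀ t ≥ 0, 0 ≤ V t)
    (hV' : ∀ t > 0, HasDerivAt V (V' t) t)
    (hdiss : ∀ t > 0, V' t ≤ lam t * (-c * V t + C * d t ^ 2))
    (hlam : ∀ t > 0, 0 < lam t ∧ lam t ≤ Λ)
    (hlam_low : ∀ R, ∃ ℓ > 0, ∀ t > 0, V t ≤ R → ℓ ≤ lam t)
    (hd : ∀ t ≥ 0, |d t| ≤ M) :
    ∃ a > 0, ∃ K > 0, ∀ t ≥ 0,
      V t ≤ V 0 * exp (-(a * t)) + K * sSup ((fun s => |d s|) '' Icc 0 t) ^ 2 := by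
  have hΛ : 0 < Λ := (hlam 1 one_pos).1.trans_le (hlam 1 one_pos).2
  obtain ⟨ℓ, hℓ, hℓV⟩ := hlam_low (V 0 + C * M ^ 2 / c)
  have hbdd : ∀ t > 0, ℓ ≤ lam t := fun t ht => hℓV t ht (le_add_div_of_dissipation hc hC.le hV
    (hV_nonneg 0 le_rfl) hV' hdiss (fun s hs => (hlam s hs).1.le) hd ht.le)
  refine ⟨ℓ * c, by positivity, Λ * C / (ℓ * c), by positivity, fun t ht => ?_⟩
  set D := sSup ((fun s => |d s|) '' Icc 0 t)
  have hK : Λ * C / (ℓ * c) * (ℓ * c) = Λ * C := div_mul_cancel₀ _ (by positivity)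
  have hdecay := le_sub_mul_exp_add_of_deriv_le (K := Λ * C / (ℓ * c) * D ^ 2) ht
    (hV.mono Icc_subset_Ici_self) (fun s hs => hV' s hs.1) fun s hs => by
      have hdD : d s ^ 2 ≤ D ^ 2 := by
        have := abs_le_sSup_image_abs hd (Ioo_subset_Icc_self hs)
        exact sq_le_sq' (by linarith [neg_abs_le (d s)]) ((le_abs_self _).trans this)
      calc V' s ≤ lam s * (-c * V s + C * d s ^ 2) := hdiss s hs.1
        _ ≤ ℓ * (-c * V s) + Λ * (C * D ^ 2) := by
          nlinarith [mul_le_mul (hlam s hs.1).2 (mul_le_mul_of_nonneg_left hdD hC.le)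
            (by positivity) hΛ.le, mul_le_mul_of_nonneg_right (hbdd s hs.1)
              (mul_nonneg hc.le (hV_nonneg s hs.1.le))]
        _ = -(ℓ * c) * (V s - Λ * C / (ℓ * c) * D ^ 2) := by linear_combination (-D ^ 2) * hK
  have hexp : exp (-(ℓ * c * t)) ≤ 1 := exp_le_one_iff.mpr (by nlinarith [mul_pos hℓ hc])
  nlinarith [mul_nonneg (mul_nonneg (div_nonneg (mul_nonneg hΛ.le hC.le) (mul_pos hℓ hc).le)
    (sq_nonneg D)) (exp_pos (-(ℓ * c * t))).le]

/-- Partial derivatives on the closed half-strip `[0, ∞) × [0, 1]`, one-sided on its boundary. -/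
noncomputable def partialT (u : ℝ → ℝ → ℝ) (t x : ℝ) : ℝ :=
  fderivWithin ℝ (uncurry u) (Ici 0 ×ˢ Icc 0 1) (t, x) (1, 0)

noncomputable def partialX (u : ℝ → ℝ → ℝ) (t x : ℝ) : ℝ :=
  fderivWithin ℝ (uncurry u) (Ici 0 ×ˢ Icc 0 1) (t, x) (0, 1)

section HalfStrip

variable {u : ℝ → ℝ → ℝ} {t x : ℝ}

theorem continuousOn_slice (hu : ContinuousOn (uncurry u) (Ici 0 ×ˢ Icc 0 1))
    (ht : 0 ≤ t) : ContinuousOn (u t) (Icc 0 1) :=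
  hu.comp (continuous_const.prodMk continuous_id).continuousOn fun _ hx => ⟨ht, hx⟩

theorem intervalIntegrable_slice
    (hu : ContinuousOn (uncurry u) (Ici 0 ×ˢ Icc 0 1)) (ht : 0 ≤ t) :
    IntervalIntegrable (u t) volume 0 1 :=
  (continuousOn_slice hu ht).intervalIntegrable_of_Icc zero_le_one

theorem continuousOn_partialT (hu : ContDiffOn ℝ 1 (uncurry u) (Ici 0 ×ˢ Icc 0 1)) :
    ContinuousOn (uncurry (partialT u)) (Ici 0 ×ˢ Icc 0 1) :=
  (hu.continuousOn_fderivWithin ((uniqueDiffOn_Ici 0).prod (uniqueDiffOn_Icc one_pos))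
    le_rfl).clm_apply continuousOn_const

theorem continuousOn_partialX (hu : ContDiffOn ℝ 1 (uncurry u) (Ici 0 ×ˢ Icc 0 1)) :
    ContinuousOn (uncurry (partialX u)) (Ici 0 ×ˢ Icc 0 1) :=
  (hu.continuousOn_fderivWithin ((uniqueDiffOn_Ici 0).prod (uniqueDiffOn_Icc one_pos))
    le_rfl).clm_apply continuousOn_const

theorem hasDerivAt_partialT (hu : ContDiffOn ℝ 1 (uncurry u) (Ici 0 ×ˢ Icc 0 1))
    (ht : 0 < t) (hx : x ∈ Icc 0 1) : HasDerivAt (fun s => u s x) (partialT u t x) t := by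
  have hline : HasDerivWithinAt (fun s : ℝ => (s, x)) ((1 : ℝ), (0 : ℝ)) (Ioi 0) t :=
    ((hasDerivAt_id t).prodMk (hasDerivAt_const t x)).hasDerivWithinAt
  exact (((hu.differentiableOn one_ne_zero) (t, x) ⟨ht.le, hx⟩).hasFDerivWithinAt
    |>.comp_hasDerivWithinAt t hline fun _ hs => mem_prod.2 ⟨le_of_lt hs, hx⟩).hasDerivAt (Ioi_mem_nhds ht)

theorem hasDerivWithinAt_partialX
    (hu : ContDiffOn ℝ 1 (uncurry u) (Ici 0 ×ˢ Icc 0 1))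
    (ht : 0 ≤ t) (hx : x ∈ Icc 0 1) : HasDerivWithinAt (u t) (partialX u t x) (Icc 0 1) x := by
  have hline : HasDerivWithinAt (fun y : ℝ => (t, y)) ((0 : ℝ), (1 : ℝ)) (Icc 0 1) x :=
    ((hasDerivAt_const x t).prodMk (hasDerivAt_id x)).hasDerivWithinAt
  exact ((hu.differentiableOn one_ne_zero) (t, x) ⟨ht, hx⟩).hasFDerivWithinAt
    |>.comp_hasDerivWithinAt x hline fun _ hy => ⟨ht, hy⟩

theorem continuousOn_integral_slice
    (hu : ContinuousOn (uncurry u) (Ici 0 ×ˢ Icc 0 1)) :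
    ContinuousOn (fun t => ∫ x in (0 : ℝ)..1, u t x) (Ici 0) := by
  -- clamp into the strip to get a globally continuous function with the same slice integrals
  have hclamp : Continuous fun p : ℝ × ℝ => u (max p.1 0) (max 0 (min p.2 1)) :=
    hu.comp_continuous ((continuous_fst.max continuous_const).prodMk
      (continuous_const.max (continuous_snd.min continuous_const))) fun p =>
      mem_prod.2 ⟨mem_Ici.2 (le_max_right _ _), le_max_left _ _,
        max_le zero_le_one (min_le_right _ _)⟩
  refine (intervalIntegral.continuous_parametric_intervalIntegral_of_continuous'
    (f := fun t x => u (max t 0) (max 0 (min x 1))) hclamp 0 1).continuousOn.congr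
      fun t (ht : 0 ≤ t) => intervalIntegral.integral_congr fun x hx => ?_
  rw [uIcc_of_le zero_le_one] at hx
  simp [max_eq_left ht, max_eq_right hx.1, min_eq_left hx.2]

theorem hasDerivAt_integral_slice
    (hu : ContDiffOn ℝ 1 (uncurry u) (Ici 0 ×ˢ Icc 0 1)) (ht : 0 < t) :
    HasDerivAt (fun t => ∫ x in (0 : ℝ)..1, u t x) (∫ x in (0 : ℝ)..1, partialT u t x) t := by
  have hnear : Ioo (t / 2) (2 * t) ∈ 𝓝 t := Ioo_mem_nhds (by linarith) (by linarith)
  have hsub : Icc (t / 2) (2 * t) ×ˢ Icc (0 : ℝ) 1 ⊆ Ici 0 ×ˢ Icc 0 1 :=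
    prod_mono (fun s hs => mem_Ici.mpr (by linarith [hs.1])) subset_rfl
  obtain ⟨C, hC⟩ := (isCompact_Icc.prod isCompact_Icc).exists_bound_of_continuousOn
    ((continuousOn_partialT hu).mono hsub)
  have hIoc : uIoc (0 : ℝ) 1 ⊆ Icc 0 1 := by
    rw [uIoc_of_le zero_le_one]; exact Ioc_subset_Icc_self
  refine (intervalIntegral.hasDerivAt_integral_of_dominated_loc_of_deriv_le (bound := fun _ => C)
    hnear ?_ (intervalIntegrable_slice hu.continuousOn ht.le) ?_ ?_ intervalIntegrable_const
    ?_).2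
  · filter_upwards [Ioi_mem_nhds ht] with s hs
    exact ((continuousOn_slice hu.continuousOn (le_of_lt hs)).mono hIoc).aestronglyMeasurable
      measurableSet_uIoc
  · exact ((continuousOn_slice (continuousOn_partialT hu) ht.le).mono hIoc).aestronglyMeasurable
      measurableSet_uIoc
  · exact ae_of_all _ fun y hy s hs => hC (s, y) ⟨Ioo_subset_Icc_self hs, hIoc hy⟩
  · exact ae_of_all _ fun y hy s hs =>
      hasDerivAt_partialT hu (by linarith [hs.1]) (hIoc hy)

theorem integral_partialX (hu : ContDiffOn ℝ 1 (uncurry u) (Ici 0 ×ˢ Icc 0 1))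
    (ht : 0 ≤ t) : ∫ x in (0 : ℝ)..1, partialX u t x = u t 1 - u t 0 :=
  intervalIntegral.integral_eq_sub_of_hasDeriv_right_of_le zero_le_one
    (continuousOn_slice hu.continuousOn ht)
    (fun _ hx => ((hasDerivWithinAt_partialX hu ht (Ioo_subset_Icc_self hx)).hasDerivAt
      (Icc_mem_nhds hx.1 hx.2)).hasDerivWithinAt)
    (intervalIntegrable_slice (continuousOn_partialX hu) ht)

end HalfStrip

noncomputable def weightedEnergy (β : ℝ) (f : ℝ → ℝ) : ℝ :=
  ∫ x in (0 : ℝ)..1, exp (-(β * x)) * f x ^ 2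

theorem sq_intervalIntegral_mul_le {f g : ℝ → ℝ} {a b : ℝ} (hab : a ≤ b)
    (hf : IntervalIntegrable (fun x => f x ^ 2) volume a b)
    (hg : IntervalIntegrable (fun x => g x ^ 2) volume a b)
    (hfg : IntervalIntegrable (fun x => f x * g x) volume a b) :
    (∫ x in a..b, f x * g x) ^ 2 ≤ (∫ x in a..b, f x ^ 2) * ∫ x in a..b, g x ^ 2 := by
  have hquad : ∀ r : ℝ, 0 ≤ (∫ x in a..b, f x ^ 2) * (r * r) +
      (2 * ∫ x in a..b, f x * g x) * r + ∫ x in a..b, g x ^ 2 := fun r => by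
    have hexpand : ∫ x in a..b, (r * f x + g x) ^ 2 = ∫ x in a..b,
        ((r * r) * f x ^ 2 + (2 * r) * (f x * g x) + g x ^ 2) :=
      intervalIntegral.integral_congr fun x _ => by ring
    rw [intervalIntegral.integral_add ((hf.const_mul _).add (hfg.const_mul _)) hg,
      intervalIntegral.integral_add (hf.const_mul _) (hfg.const_mul _),
      intervalIntegral.integral_const_mul, intervalIntegral.integral_const_mul] at hexpand
    nlinarith [intervalIntegral.integral_nonneg (μ := volume) hab
      fun x _ => sq_nonneg (r * f x + g x)]
  have := discrim_le_zero hquad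
  rw [discrim] at this
  linarith

theorem integral_exp_mul {β : ℝ} (hβ : β ≠ 0) :
    ∫ x in (0 : ℝ)..1, exp (β * x) = (exp β - 1) / β := by
  rw [intervalIntegral.integral_comp_mul_left (fun x => exp x) hβ, integral_exp]
  simp [div_eq_inv_mul]

theorem weightedEnergy_nonneg (β : ℝ) (f : ℝ → ℝ) : 0 ≤ weightedEnergy β f :=
  intervalIntegral.integral_nonneg zero_le_one fun _ _ => by positivity

/-- Cauchy–Schwarz against the weight pair `e^{βx/2}`, `e^{-βx/2}`. -/
theorem sq_integral_le_mul_weightedEnergy {β : ℝ} {f : ℝ → ℝ} (hβ : β ≠ 0)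
    (hf : ContinuousOn f (Icc 0 1)) :
    (∫ x in (0 : ℝ)..1, f x) ^ 2 ≤ (exp β - 1) / β * weightedEnergy β f := by
  have hint : ∀ {g : ℝ → ℝ}, ContinuousOn g (Icc 0 1) → IntervalIntegrable g volume 0 1 :=
    fun hg => hg.intervalIntegrable_of_Icc zero_le_one
  have hcs := sq_intervalIntegral_mul_le (f := fun x => exp (β * x / 2))
    (g := fun x => exp (-(β * x) / 2) * f x) zero_le_one (hint (by fun_prop))
    (hint ((continuous_exp.comp (by fun_prop)).continuousOn.mul hf |>.pow 2))
    (hint ((by fun_prop : Continuous fun x : ℝ => exp (β * x / 2)).continuousOn.mul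
      ((continuous_exp.comp (by fun_prop)).continuousOn.mul hf)))
  have h1 : ∀ x, exp (β * x / 2) * (exp (-(β * x) / 2) * f x) = f x := fun x => by
    rw [← mul_assoc, ← exp_add]; ring_nf; simp
  have h2 : ∀ x, exp (β * x / 2) ^ 2 = exp (β * x) := fun x => by rw [← exp_nat_mul]; ring_nf
  have h3 : ∀ x, (exp (-(β * x) / 2) * f x) ^ 2 = exp (-(β * x)) * f x ^ 2 := fun x => by
    rw [mul_pow, ← exp_nat_mul]; ring_nf
  simp only [h1, h2, h3, integral_exp_mul hβ] at hcs
  exact hcs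

theorem weightedEnergy_le_integral_sq {β : ℝ} {f : ℝ → ℝ} (hβ : 0 ≤ β)
    (hf : ContinuousOn f (Icc 0 1)) : weightedEnergy β f ≤ ∫ x in (0 : ℝ)..1, f x ^ 2 := by
  refine intervalIntegral.integral_mono_on zero_le_one
    ((continuous_exp.comp (by fun_prop)).continuousOn.mul (hf.pow 2) |>.intervalIntegrable_of_Icc
      zero_le_one) ((hf.pow 2).intervalIntegrable_of_Icc zero_le_one) fun x hx => ?_
  have : exp (-(β * x)) ≤ 1 := exp_le_one_iff.mpr (by nlinarith [hx.1])
  nlinarith [sq_nonneg (f x)]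

theorem integral_sq_le_exp_mul_weightedEnergy {β : ℝ} {f : ℝ → ℝ} (hβ : 0 ≤ β)
    (hf : ContinuousOn f (Icc 0 1)) : ∫ x in (0 : ℝ)..1, f x ^ 2 ≤ exp β * weightedEnergy β f := by
  rw [weightedEnergy, ← intervalIntegral.integral_const_mul]
  refine intervalIntegral.integral_mono_on zero_le_one
    ((hf.pow 2).intervalIntegrable_of_Icc zero_le_one)
    (((continuous_exp.comp (by fun_prop)).continuousOn.mul (hf.pow 2)).const_mul _
      |>.intervalIntegrable_of_Icc zero_le_one) fun x hx => ?_
  have : 1 ≤ exp β * exp (-(β * x)) := by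
    rw [← exp_add]; exact one_le_exp (by nlinarith [hx.2])
  nlinarith [sq_nonneg (f x)]

section WeightedEnergy

variable {u : ℝ → ℝ → ℝ} {β t : ℝ}

theorem continuousOn_weightedEnergy
    (hu : ContinuousOn (uncurry u) (Ici 0 ×ˢ Icc 0 1)) :
    ContinuousOn (fun t => weightedEnergy β (u t)) (Ici 0) :=
  continuousOn_integral_slice (u := fun t x => exp (-(β * x)) * u t x ^ 2)
    ((continuous_exp.comp (continuous_const.mul continuous_snd).neg).continuousOn.mul (hu.pow 2))

theorem partialT_exp_mul_sq_of_transport {a x : ℝ}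
    (hu : ContDiffOn ℝ 1 (uncurry u) (Ici 0 ×ˢ Icc 0 1))
    (hG : ContDiffOn ℝ 1 (uncurry fun t x => exp (-(β * x)) * u t x ^ 2) (Ici 0 ×ˢ Icc 0 1))
    (hpde : deriv (fun s => u s x) t + a * deriv (u t) x = 0) (ht : 0 < t) (hx : x ∈ Ioo 0 1) :
    partialT (fun t x => exp (-(β * x)) * u t x ^ 2) t x =
      -a * (partialX (fun t x => exp (-(β * x)) * u t x ^ 2) t x +
        β * (exp (-(β * x)) * u t x ^ 2)) := by
  have hx' := Ioo_subset_Icc_self hx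
  have hut := hasDerivAt_partialT hu ht hx'
  have hux := (hasDerivWithinAt_partialX hu ht.le hx').hasDerivAt (Icc_mem_nhds hx.1 hx.2)
  have hGt : partialT (fun t x => exp (-(β * x)) * u t x ^ 2) t x =
      exp (-(β * x)) * (2 * u t x * partialT u t x) :=
    (hasDerivAt_partialT hG ht hx').unique (by simpa using (hut.pow 2).const_mul (exp (-(β * x))))
  have hexp : HasDerivAt (fun y => -(β * y)) (-β) x := by
    simpa using ((hasDerivAt_id' x).const_mul β).fun_neg
  have hsq : HasDerivAt (fun y => u t y ^ 2) (2 * u t x * partialX u t x) x := by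
    simpa using hux.fun_pow 2
  have hGx : partialX (fun t x => exp (-(β * x)) * u t x ^ 2) t x =
      -β * (exp (-(β * x)) * u t x ^ 2) + exp (-(β * x)) * (2 * u t x * partialX u t x) :=
    ((hasDerivWithinAt_partialX hG ht.le hx').hasDerivAt (Icc_mem_nhds hx.1 hx.2)).unique
      ((hexp.exp.fun_mul hsq).congr_deriv (by ring))
  rw [hut.deriv, hux.deriv] at hpde
  rw [hGt, hGx]
  linear_combination (2 * exp (-(β * x)) * u t x) * hpde

/-- Integrating by parts, the weight `e^{-βx}` produces the dissipation term `-β a V`. -/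
theorem hasDerivAt_weightedEnergy_of_transport {a : ℝ}
    (hu : ContDiffOn ℝ 1 (uncurry u) (Ici 0 ×ˢ Icc 0 1))
    (hpde : ∀ x ∈ Ioo (0 : ℝ) 1, deriv (fun s => u s x) t + a * deriv (u t) x = 0) (ht : 0 < t) :
    HasDerivAt (fun t => weightedEnergy β (u t))
      (a * (u t 0 ^ 2 - exp (-β) * u t 1 ^ 2 - β * weightedEnergy β (u t))) t := by
  have hG : ContDiffOn ℝ 1 (uncurry fun t x => exp (-(β * x)) * u t x ^ 2)
      (Ici 0 ×ˢ Icc 0 1) :=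
    (contDiff_exp.comp (contDiff_const.mul contDiff_snd).neg).contDiffOn.mul (hu.pow 2)
  refine (hasDerivAt_integral_slice hG ht).congr_deriv ?_
  rw [intervalIntegral.integral_congr_Ioo_of_le zero_le_one
      fun x hx => partialT_exp_mul_sq_of_transport hu hG (hpde x hx) ht hx,
    intervalIntegral.integral_const_mul,
    intervalIntegral.integral_add (g := fun x => β * (exp (-(β * x)) * u t x ^ 2))
      (intervalIntegrable_slice (continuousOn_partialX hG) ht.le)
      ((intervalIntegrable_slice (u := fun t x => exp (-(β * x)) * u t x ^ 2) hG.continuousOn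
        ht.le).const_mul β),
    intervalIntegral.integral_const_mul, integral_partialX hG ht.le]
  simp only [weightedEnergy, mul_zero, neg_zero, exp_zero, one_mul, mul_one]
  ring

end WeightedEnergy

theorem exists_iss_of_weightedEnergy_decay {u : ℝ → ℝ → ℝ} {D : ℝ → ℝ} {β a K : ℝ} (hβ : 0 ≤ β)
    (ha : 0 < a) (hK : 0 < K) (hu : ContinuousOn (uncurry u) (Ici 0 ×ˢ Icc 0 1))
    (hD : ∀ t ≥ 0, 0 ≤ D t)
    (hdecay : ∀ t ≥ 0,
      weightedEnergy β (u t) ≤ weightedEnergy β (u 0) * exp (-(a * t)) + K * D t ^ 2) :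
    ∃ γ₁ > (0 : ℝ), ∃ γ₂ > (0 : ℝ), ∃ γ₃ > (0 : ℝ), ∀ t ≥ (0 : ℝ),
      √(∫ x in (0 : ℝ)..1, u t x ^ 2) ≤
        γ₂ * exp (-γ₁ * t) * √(∫ x in (0 : ℝ)..1, u 0 x ^ 2) + γ₃ * D t := by
  refine ⟨a / 2, by positivity, exp (β / 2), exp_pos _, exp (β / 2) * √K, by positivity,
    fun t ht => sqrt_le_mul_sqrt_add_mul (intervalIntegral.integral_nonneg zero_le_one
      fun _ _ => sq_nonneg _) (by positivity) (by positivity) (hD t ht) ?_⟩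
  have hp : (exp (β / 2) * exp (-(a / 2) * t)) ^ 2 = exp β * exp (-(a * t)) := by
    rw [mul_pow, ← exp_nat_mul, ← exp_nat_mul]; ring_nf
  have hq : (exp (β / 2) * √K) ^ 2 = exp β * K := by
    rw [mul_pow, sq_sqrt hK.le, ← exp_nat_mul]; ring_nf
  have h₀ := weightedEnergy_le_integral_sq hβ (continuousOn_slice hu le_rfl)
  rw [hp, hq]
  calc ∫ x in (0 : ℝ)..1, u t x ^ 2 ≤ exp β * weightedEnergy β (u t) :=
        integral_sq_le_exp_mul_weightedEnergy hβ (continuousOn_slice hu ht)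
    _ ≤ exp β * (weightedEnergy β (u 0) * exp (-(a * t)) + K * D t ^ 2) := by
        gcongr; exact hdecay t ht
    _ ≤ _ := by nlinarith [exp_pos (-(a * t)), exp_pos β]

theorem exists_weightedEnergy_decay_of_closedLoop {A B ρs k β c C M : ℝ} {d W : ℝ → ℝ}
    {ρ : ℝ → ℝ → ℝ} (hA : 0 < A) (hB : 0 < B) (hρs : 0 ≤ ρs) (hβ : 0 < β) (hc : 0 < c) (hC : 0 < C)
    (hbd : ∀ u w δ V : ℝ, 0 ≤ V → w ^ 2 ≤ (exp β - 1) / β * V →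
      (k * u + ((1 - k) * (ρs / (B + ρs)) * w + k * δ)) ^ 2 - exp (-β) * u ^ 2 ≤
        (β - c) * V + C * δ ^ 2)
    (hd : ∀ t ≥ 0, |d t| ≤ M)
    (hreg : ContDiffOn ℝ 1 (uncurry ρ) (Ici 0 ×ˢ Icc 0 1))
    (hpos : ∀ t ∈ Ici (0 : ℝ), ∀ x ∈ Icc (0 : ℝ) 1, 0 ≤ ρ t x)
    (hW : ∀ t, W t = ∫ x in (0 : ℝ)..1, ρ t x)
    (hpde : ∀ t > 0, ∀ x ∈ Ioo (0 : ℝ) 1,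
      deriv (fun s => ρ s x) t + A / (B + W t) * deriv (fun y => ρ t y) x = 0)
    (hbc : ∀ t > 0, ρ t 0 * (A / (B + W t)) =
      ρs * (A / (B + ρs)) + k * ((ρ t 1 + d t) * (A / (B + W t)) - ρs * (A / (B + ρs)))) :
    ∃ a > 0, ∃ K > 0, ∀ t ≥ 0, weightedEnergy β (fun x => ρ t x - ρs) ≤
      weightedEnergy β (fun x => ρ 0 x - ρs) * exp (-(a * t)) +
        K * sSup ((fun s => |d s|) '' Icc 0 t) ^ 2 := by
  set u : ℝ → ℝ → ℝ := fun t x => ρ t x - ρs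
  have hu : ContDiffOn ℝ 1 (uncurry u) (Ici 0 ×ˢ Icc 0 1) :=
    hreg.sub contDiffOn_const
  have hC₁ : 0 < (exp β - 1) / β := div_pos (by linarith [add_one_lt_exp hβ.ne']) hβ
  have hW₀ : ∀ t ≥ 0, 0 < B + W t := fun t ht => by
    linarith [(hW t).symm ▸ intervalIntegral.integral_nonneg zero_le_one (hpos t ht)]
  have hWV : ∀ t ≥ 0, (W t - ρs) ^ 2 ≤ (exp β - 1) / β * weightedEnergy β (u t) := fun t ht => by
    have h := sq_integral_le_mul_weightedEnergy hβ.ne' (continuousOn_slice hu.continuousOn ht)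
    rwa [intervalIntegral.integral_sub (intervalIntegrable_slice hreg.continuousOn ht)
      intervalIntegrable_const, ← hW t, intervalIntegral.integral_const, sub_zero, one_smul] at h
  have hlam : ∀ t > 0, 0 < A / (B + W t) ∧ A / (B + W t) ≤ A / B := fun t ht =>
    ⟨div_pos hA (hW₀ t ht.le), div_le_div_of_nonneg_left hA.le hB (by
      linarith [(hW t).symm ▸ intervalIntegral.integral_nonneg zero_le_one (hpos t ht.le)])⟩
  have hdiss : ∀ t > 0, A / (B + W t) * (u t 0 ^ 2 - exp (-β) * u t 1 ^ 2 -
      β * weightedEnergy β (u t)) ≤ A / (B + W t) * (-c * weightedEnergy β (u t) + C * d t ^ 2) :=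
    fun t ht => by
      refine mul_le_mul_of_nonneg_left ?_ (hlam t ht).1.le
      have h := hbd (u t 1) (W t - ρs) (d t) _ (weightedEnergy_nonneg _ _) (hWV t ht.le)
      rw [← boundary_deviation_eq hA.ne' (by positivity) (hW₀ t ht.le).ne' (hbc t ht)] at h
      linarith
  have hlam_low : ∀ R, ∃ ℓ > 0, ∀ t > 0, weightedEnergy β (u t) ≤ R → ℓ ≤ A / (B + W t) :=
    fun R => ⟨A / (B + ρs + √((exp β - 1) / β * R)), by positivity, fun t ht hR =>
      div_le_div_of_nonneg_left hA.le (hW₀ t ht.le) (by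
        linarith [le_sqrt_of_sq_le ((hWV t ht.le).trans (mul_le_mul_of_nonneg_left hR hC₁.le))])⟩
  exact exists_decay_of_dissipation hc hC (continuousOn_weightedEnergy hu.continuousOn)
    (fun t _ => weightedEnergy_nonneg _ _)
    (fun t ht => hasDerivAt_weightedEnergy_of_transport hu
      (fun x hx => by simpa [u] using hpde t ht x hx) ht) hdiss hlam hlam_low hd

theorem iss_nonlocal_conservation_law_general
    (A B ρs k : ℝ) (d : ℝ → ℝ) (ρ : ℝ → ℝ → ℝ) (W : ℝ → ℝ) (θ : ℝ)
    (hA : 0 < A) (hB : 0 < B) (hρs : 0 ≤ ρs) (hk0 : 0 ≤ k)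
    (hdbdd : ∃ M : ℝ, ∀ t, 0 ≤ t → |d t| ≤ M)
    (hθ : θ = ρs / (B + ρs))
    (hβ : ∃ β > (0:ℝ),
      2 * k < Real.exp (-β) ∧
      θ * (Real.exp (-β) - 2 * k) * ((Real.exp β - 1) / β) / (1 - k) < 1 ∧
      0 < β - θ ^ 2 * ((Real.exp β - 1) / β) *
        ((2 - Real.exp (-β)) + ((2 * k - Real.exp (-β)) / (1 - k)) ^ 2))
    (hreg : ContDiffOn ℝ 1 (fun p : ℝ × ℝ => ρ p.1 p.2) (Ici (0:ℝ) ×ˢ Icc (0:ℝ) 1))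
    (hpos : ∀ t ∈ Ici (0:ℝ), ∀ x ∈ Icc (0:ℝ) 1, 0 ≤ ρ t x)
    (hW : ∀ t, W t = ∫ x in (0:ℝ)..1, ρ t x)
    (hpde : ∀ t > (0:ℝ), ∀ x ∈ Ioo (0:ℝ) 1,
      deriv (fun s => ρ s x) t + (A / (B + W t)) * deriv (fun y => ρ t y) x = 0)
    (hbc : ∀ t > (0:ℝ),
      ρ t 0 * (A / (B + W t)) =
        ρs * (A / (B + ρs)) +
          k * ((ρ t 1 + d t) * (A / (B + W t)) - ρs * (A / (B + ρs)))) :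
    ∃ γ₁ > (0:ℝ), ∃ γ₂ > (0:ℝ), ∃ γ₃ > (0:ℝ), ∀ t ≥ (0:ℝ),
      Real.sqrt (∫ x in (0:ℝ)..1, (ρ t x - ρs) ^ 2) ≤
        γ₂ * Real.exp (-γ₁ * t) * Real.sqrt (∫ x in (0:ℝ)..1, (ρ 0 x - ρs) ^ 2) +
        γ₃ * sSup ((fun s => |d s|) '' Icc (0:ℝ) t) := by
  obtain ⟨β, hβ0, hkβ, -, hβ3⟩ := hβ
  obtain ⟨M, hM⟩ := hdbdd
  have hC₁ : 0 < (exp β - 1) / β := div_pos (by linarith [add_one_lt_exp hβ0.ne']) hβ0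
  obtain ⟨c, hc, C, hC, hbd⟩ := exists_boundary_dissipation (θ := θ) (β := β) hk0 hkβ
    (exp_lt_one_iff.mpr (neg_lt_zero.mpr hβ0)) hC₁ (by
      nlinarith [mul_nonneg (mul_nonneg (sq_nonneg θ) hC₁.le)
        (sq_nonneg ((2 * k - exp (-β)) / (1 - k)))])
  subst hθ
  obtain ⟨a, ha, K, hK, hdecay⟩ := exists_weightedEnergy_decay_of_closedLoop hA hB hρs hβ0 hc hC
    hbd hM hreg hpos hW hpde hbc
  exact exists_iss_of_weightedEnergy_decay (u := fun t x => ρ t x - ρs) hβ0.le ha hK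
    (hreg.continuousOn.sub continuousOn_const)
    (fun t ht => (abs_nonneg _).trans (abs_le_sSup_image_abs hM ⟨le_rfl, ht⟩)) hdecay

/-- ISS in L² for the closed-loop scalar conservation law with nonlocal
velocity `λ(s) = A/(B+s)` and measurement error `d`. -/
theorem iss_nonlocal_conservation_law
    (A B ρs k R : ℝ) (d : ℝ → ℝ) (ρ : ℝ → ℝ → ℝ) (W : ℝ → ℝ) (θ : ℝ)
    (hA : 0 < A) (hB : 0 < B) (hρs : 0 ≤ ρs) (hk0 : 0 ≤ k) (hk1 : k < 1) (hR : 0 < R)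
    (hdbdd : ∃ M : ℝ, ∀ t, 0 ≤ t → |d t| ≤ M)
    (hθ : θ = ρs / (B + ρs))
    (hβ : ∃ β > (0:ℝ),
      2 * k < Real.exp (-β) ∧
      θ * (Real.exp (-β) - 2 * k) * ((Real.exp β - 1) / β) / (1 - k) < 1 ∧
      0 < β - θ ^ 2 * ((Real.exp β - 1) / β) *
        ((2 - Real.exp (-β)) + ((2 * k - Real.exp (-β)) / (1 - k)) ^ 2))
    (hreg : ContDiffOn ℝ 1 (fun p : ℝ × ℝ => ρ p.1 p.2) (Ici (0:ℝ) ×ˢ Icc (0:ℝ) 1))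
    (hpos : ∀ t ∈ Ici (0:ℝ), ∀ x ∈ Icc (0:ℝ) 1, 0 ≤ ρ t x)
    (hW : ∀ t, W t = ∫ x in (0:ℝ)..1, ρ t x)
    (hpde : ∀ t > (0:ℝ), ∀ x ∈ Ioo (0:ℝ) 1,
      deriv (fun s => ρ s x) t + (A / (B + W t)) * deriv (fun y => ρ t y) x = 0)
    (hbc : ∀ t > (0:ℝ),
      ρ t 0 * (A / (B + W t)) =
        ρs * (A / (B + ρs)) +
          k * ((ρ t 1 + d t) * (A / (B + W t)) - ρs * (A / (B + ρs))))
    (hinit : Real.sqrt (∫ x in (0:ℝ)..1, (ρ 0 x - ρs) ^ 2) ≤ R) :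
    ∃ γ₁ > (0:ℝ), ∃ γ₂ > (0:ℝ), ∃ γ₃ > (0:ℝ), ∀ t ≥ (0:ℝ),
      Real.sqrt (∫ x in (0:ℝ)..1, (ρ t x - ρs) ^ 2) ≤
        γ₂ * Real.exp (-γ₁ * t) * Real.sqrt (∫ x in (0:ℝ)..1, (ρ 0 x - ρs) ^ 2) +
        γ₃ * sSup ((fun s => |d s|) '' Icc (0:ℝ) t) :=
  iss_nonlocal_conservation_law_general A B ρs k d ρ W θ hA hB hρs hk0 hdbdd hθ hβ hreg hpos hW hpde
    hbc
end

section
/- Let k∈[0,1), θ≥0 and β>0 satisfy e^{−β}>2k, and set a=θ(2k−e^{−β})/(1−k). Then for all real numbers ρ₁ and W: 2(kρ₁+(1−k)θW)² − e^{−β}ρ₁² + 2a(k−1)W(ρ₁−θW) + a²W² ≤ [(2−e^{−β}) + ((2k−e^{−β})/(1−k))²]·θ²W². -/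
open Real

/-- Bound on the boundary term in the Lyapunov analysis. -/
theorem boundary_term_bound
    (k θ β : ℝ) (hk0 : 0 ≤ k) (hk1 : k < 1) (hθ : 0 ≤ θ) (hβ : 0 < β)
    (hkβ : 2 * k < Real.exp (-β))
    (a : ℝ) (ha : a = θ * (2 * k - Real.exp (-β)) / (1 - k))
    (ρ₁ W : ℝ) :
    2 * (k * ρ₁ + (1 - k) * θ * W) ^ 2 - Real.exp (-β) * ρ₁ ^ 2
      + 2 * a * (k - 1) * W * (ρ₁ - θ * W) + a ^ 2 * W ^ 2 ≤
    ((2 - Real.exp (-β)) + ((2 * k - Real.exp (-β)) / (1 - k)) ^ 2) * θ ^ 2 * W ^ 2 := by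
  have hk : (0:ℝ) < 1 - k := by linarith
  set E := Real.exp (-β) with hE
  have ha' : a * (1 - k) = θ * (2 * k - E) := by
    rw [ha]; field_simp
  have hkey : 2 * (k * ρ₁ + (1 - k) * θ * W) ^ 2 - E * ρ₁ ^ 2
      + 2 * a * (k - 1) * W * (ρ₁ - θ * W) + a ^ 2 * W ^ 2
      - (((2 - E) + ((2 * k - E) / (1 - k)) ^ 2) * θ ^ 2 * W ^ 2)
      = (2 * k ^ 2 - E) * (ρ₁ - θ * W) ^ 2 := by
    have h2 : a = θ * (2 * k - E) / (1 - k) := ha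
    rw [h2]
    field_simp
    ring
  have h2 : 2 * k ^ 2 - E ≤ 0 := by nlinarith
  have h3 : (2 * k ^ 2 - E) * (ρ₁ - θ * W) ^ 2 ≤ 0 :=
    mul_nonpos_of_nonpos_of_nonneg h2 (sq_nonneg _)
  linarith
end

section
/- Let J∈ℕ with J≥1, Δx=1/J, x_j=(j−1/2)Δx for j=1,…,J, β>0, and K_Δ := Δx·e^{βΔx/2}(e^β−1)/(e^{βΔx}−1). For every (ρ₁,…,ρ_J)∈ℝ^J, writing W=Δx·Σ_{j=1}^Jρ_j and I=Δx·Σ_{j=1}^Jρ_j²e^{−βx_j}, one has: (i) W² ≤ K_Δ·I; and (ii) if a∈ℝ satisfies −1/K_Δ < a ≤ 0, then (1+aK_Δ)·I ≤ I + aW² ≤ I with 1+aK_Δ>0, and consequently e^{−β}(1+aK_Δ)·Δx·Σ_{j=1}^Jρ_j² ≤ I + aW² ≤ Δx·Σ_{j=1}^Jρ_j². -/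
open Real Finset

/-- Discrete equivalence of the Lyapunov functional with the squared
discrete L²-norm. -/
theorem discrete_lyapunov_norm_equivalence
    (J : ℕ) (hJ : 1 ≤ J) (Δx : ℝ) (hΔx : Δx = 1 / (J : ℝ))
    (β : ℝ) (hβ : 0 < β)
    (K : ℝ)
    (hK : K = Δx * Real.exp (β * Δx / 2) * (Real.exp β - 1) / (Real.exp (β * Δx) - 1))
    (ρ : ℕ → ℝ) (W I : ℝ)
    (hW : W = Δx * ∑ j ∈ Finset.Icc 1 J, ρ j)
    (hI : I = Δx * ∑ j ∈ Finset.Icc 1 J,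
      (ρ j) ^ 2 * Real.exp (-β * (((j : ℝ) - 1 / 2) * Δx))) :
    W ^ 2 ≤ K * I ∧
    ∀ a : ℝ, -1 / K < a → a ≤ 0 →
      (0 < 1 + a * K ∧
       (1 + a * K) * I ≤ I + a * W ^ 2 ∧
       I + a * W ^ 2 ≤ I ∧
       Real.exp (-β) * (1 + a * K) * (Δx * ∑ j ∈ Finset.Icc 1 J, (ρ j) ^ 2) ≤
         I + a * W ^ 2 ∧
       I + a * W ^ 2 ≤ Δx * ∑ j ∈ Finset.Icc 1 J, (ρ j) ^ 2) := by
  have hJ0 : (0:ℝ) < J := by exact_mod_cast Nat.lt_of_lt_of_le Nat.zero_lt_one hJ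
  have hΔx0 : 0 < Δx := by rw [hΔx]; positivity
  have hJΔx : (J:ℝ) * Δx = 1 := by
    rw [hΔx]; field_simp
  have hβΔx : 0 < β * Δx := by positivity
  have hexp1 : 1 < Real.exp (β * Δx) := by
    rw [← Real.exp_zero]; exact Real.exp_lt_exp.mpr hβΔx
  have hden : 0 < Real.exp (β * Δx) - 1 := by linarith
  have hexpβ : 1 < Real.exp β := by
    rw [← Real.exp_zero]; exact Real.exp_lt_exp.mpr hβ
  have hK0 : 0 < K := by
    rw [hK]
    exact div_pos (mul_pos (mul_pos hΔx0 (Real.exp_pos _)) (by linarith)) hden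
  -- geometric sum
  set S : ℝ := ∑ j ∈ Finset.Icc 1 J, Real.exp (β * (((j : ℝ) - 1 / 2) * Δx)) with hS
  have hSval : Δx * S = K := by
    have h1 : S = ∑ i ∈ Finset.range J,
        Real.exp (β * Δx / 2) * (Real.exp (β * Δx)) ^ i := by
      rw [hS, ← Finset.Ico_add_one_right_eq_Icc, Finset.sum_Ico_eq_sum_range]
      simp only [Nat.add_sub_cancel, Nat.succ_sub_one]
      refine Finset.sum_congr rfl fun i _ => ?_
      rw [← Real.exp_nat_mul, ← Real.exp_add]
      congr 1
      push_cast
      ring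
    have h2 : (Real.exp (β * Δx)) ^ J = Real.exp β := by
      rw [← Real.exp_nat_mul]
      congr 1
      calc (J:ℝ) * (β * Δx) = β * ((J:ℝ) * Δx) := by ring
        _ = β := by rw [hJΔx, mul_one]
    rw [h1, ← Finset.mul_sum, geom_sum_eq (ne_of_gt hexp1), h2, hK]
    field_simp
  -- Cauchy–Schwarz
  have hterm : ∀ j ∈ Finset.Icc 1 J,
      ρ j = (ρ j * Real.exp (-β * (((j : ℝ) - 1 / 2) * Δx) / 2)) *
        Real.exp (β * (((j : ℝ) - 1 / 2) * Δx) / 2) := by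
    intro j _
    rw [mul_assoc, ← Real.exp_add]
    ring_nf
    rw [Real.exp_zero, mul_one]
  have hCSraw := Finset.sum_mul_sq_le_sq_mul_sq (Finset.Icc 1 J)
      (fun j => ρ j * Real.exp (-β * (((j : ℝ) - 1 / 2) * Δx) / 2))
      (fun j => Real.exp (β * (((j : ℝ) - 1 / 2) * Δx) / 2))
  have hsq1 : ∀ j : ℕ, (ρ j * Real.exp (-β * (((j : ℝ) - 1 / 2) * Δx) / 2)) ^ 2
      = (ρ j) ^ 2 * Real.exp (-β * (((j : ℝ) - 1 / 2) * Δx)) := by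
    intro j
    rw [mul_pow, sq (Real.exp _), ← Real.exp_add]
    ring_nf
  have hsq2 : ∀ j : ℕ, (Real.exp (β * (((j : ℝ) - 1 / 2) * Δx) / 2)) ^ 2
      = Real.exp (β * (((j : ℝ) - 1 / 2) * Δx)) := by
    intro j
    rw [sq, ← Real.exp_add]
    ring_nf
  have hCS : W ^ 2 ≤ K * I := by
    have hW2 : W ^ 2 = Δx ^ 2 * (∑ j ∈ Finset.Icc 1 J, ρ j) ^ 2 := by
      rw [hW]; ring
    have hsum_eq : (∑ j ∈ Finset.Icc 1 J, ρ j) ^ 2 ≤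
        (∑ j ∈ Finset.Icc 1 J, (ρ j) ^ 2 * Real.exp (-β * (((j : ℝ) - 1 / 2) * Δx))) * S := by
      calc (∑ j ∈ Finset.Icc 1 J, ρ j) ^ 2
          = (∑ j ∈ Finset.Icc 1 J, (ρ j * Real.exp (-β * (((j : ℝ) - 1 / 2) * Δx) / 2)) *
              Real.exp (β * (((j : ℝ) - 1 / 2) * Δx) / 2)) ^ 2 := by
            congr 1; exact Finset.sum_congr rfl hterm
        _ ≤ (∑ j ∈ Finset.Icc 1 J, (ρ j * Real.exp (-β * (((j : ℝ) - 1 / 2) * Δx) / 2)) ^ 2) *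
              ∑ j ∈ Finset.Icc 1 J, (Real.exp (β * (((j : ℝ) - 1 / 2) * Δx) / 2)) ^ 2 := hCSraw
        _ = (∑ j ∈ Finset.Icc 1 J, (ρ j) ^ 2 * Real.exp (-β * (((j : ℝ) - 1 / 2) * Δx))) * S := by
            rw [hS]; congr 1
            · exact Finset.sum_congr rfl fun j _ => hsq1 j
            · exact Finset.sum_congr rfl fun j _ => hsq2 j
    calc W ^ 2 = Δx ^ 2 * (∑ j ∈ Finset.Icc 1 J, ρ j) ^ 2 := hW2
      _ ≤ Δx ^ 2 * ((∑ j ∈ Finset.Icc 1 J, (ρ j) ^ 2 *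
            Real.exp (-β * (((j : ℝ) - 1 / 2) * Δx))) * S) := by
          exact mul_le_mul_of_nonneg_left hsum_eq (by positivity)
      _ = (Δx * S) * (Δx * ∑ j ∈ Finset.Icc 1 J, (ρ j) ^ 2 *
            Real.exp (-β * (((j : ℝ) - 1 / 2) * Δx))) := by ring
      _ = K * I := by rw [hSval, hI]
  -- bounds on I vs N
  have hxj : ∀ j ∈ Finset.Icc 1 J, 0 ≤ ((j : ℝ) - 1 / 2) * Δx ∧ ((j : ℝ) - 1 / 2) * Δx ≤ 1 := by
    intro j hj
    rw [Finset.mem_Icc] at hj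
    have h1 : (1:ℝ) ≤ j := by exact_mod_cast hj.1
    have h2 : (j:ℝ) ≤ J := by exact_mod_cast hj.2
    constructor
    · nlinarith
    · nlinarith
  have hIlow : Real.exp (-β) * (Δx * ∑ j ∈ Finset.Icc 1 J, (ρ j) ^ 2) ≤ I := by
    rw [hI, ← mul_assoc, mul_comm (Real.exp (-β)) Δx, mul_assoc, Finset.mul_sum]
    refine mul_le_mul_of_nonneg_left (Finset.sum_le_sum fun j hj => ?_) hΔx0.le
    rw [mul_comm (Real.exp (-β))]
    refine mul_le_mul_of_nonneg_left ?_ (sq_nonneg _)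
    exact Real.exp_le_exp.mpr (by nlinarith [(hxj j hj).2])
  have hIhigh : I ≤ Δx * ∑ j ∈ Finset.Icc 1 J, (ρ j) ^ 2 := by
    rw [hI]
    refine mul_le_mul_of_nonneg_left (Finset.sum_le_sum fun j hj => ?_) hΔx0.le
    calc (ρ j) ^ 2 * Real.exp (-β * (((j : ℝ) - 1 / 2) * Δx))
        ≤ (ρ j) ^ 2 * 1 := by
          refine mul_le_mul_of_nonneg_left ?_ (sq_nonneg _)
          exact Real.exp_le_one_iff.mpr (by nlinarith [(hxj j hj).1])
      _ = (ρ j) ^ 2 := mul_one _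
  have hI0 : 0 ≤ I := by
    rw [hI]
    refine mul_nonneg hΔx0.le (Finset.sum_nonneg fun j _ => ?_)
    positivity
  refine ⟨hCS, fun a ha1 ha2 => ?_⟩
  have h1aK : 0 < 1 + a * K := by
    have := (div_lt_iff₀ hK0).mp (by linarith : (-1) / K < a)
    linarith
  have haW : a * (K * I) ≤ a * W ^ 2 := mul_le_mul_of_nonpos_left hCS ha2
  have h2 : (1 + a * K) * I ≤ I + a * W ^ 2 := by
    have hexp : (1 + a * K) * I = I + a * (K * I) := by ring
    rw [hexp]; linarith
  have h3 : I + a * W ^ 2 ≤ I := by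
    have := mul_nonpos_of_nonpos_of_nonneg ha2 (sq_nonneg W)
    linarith
  refine ⟨h1aK, h2, h3, ?_, le_trans h3 hIhigh⟩
  calc Real.exp (-β) * (1 + a * K) * (Δx * ∑ j ∈ Finset.Icc 1 J, (ρ j) ^ 2)
      = (1 + a * K) * (Real.exp (-β) * (Δx * ∑ j ∈ Finset.Icc 1 J, (ρ j) ^ 2)) := by ring
    _ ≤ (1 + a * K) * I := mul_le_mul_of_nonneg_left hIlow h1aK.le
    _ ≤ I + a * W ^ 2 := h2
end

section
/- Let k∈[0,1), θ≥0, β>0 with e^{−β}>2k, let a=θ(2k−e^{−β})/(1−k), and let μ∈(0,1]. Then for all real numbers ρ_J and W: μ·(2(kρ_J+(1−k)θW)² − e^{−β}ρ_J²) − 2a(1−k)(ρ_J−θW)W + a²W² ≤ [(2−1/μ)(2k−e^{−β}) + 2(1−k)μ + ((2k−e^{−β})/(1−k))²]·θ²W². -/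
open Real

/-- Bound on the discrete boundary term in the discrete Lyapunov analysis. -/
theorem discrete_boundary_term_bound
    (k θ β μ : ℝ) (hk0 : 0 ≤ k) (hk1 : k < 1) (hθ : 0 ≤ θ) (hβ : 0 < β)
    (hkβ : 2 * k < Real.exp (-β))
    (a : ℝ) (ha : a = θ * (2 * k - Real.exp (-β)) / (1 - k))
    (hμ0 : 0 < μ) (hμ1 : μ ≤ 1)
    (ρJ W : ℝ) :
    μ * (2 * (k * ρJ + (1 - k) * θ * W) ^ 2 - Real.exp (-β) * ρJ ^ 2)
      - 2 * a * (1 - k) * (ρJ - θ * W) * W + a ^ 2 * W ^ 2 ≤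
    ((2 - 1 / μ) * (2 * k - Real.exp (-β)) + 2 * (1 - k) * μ
      + ((2 * k - Real.exp (-β)) / (1 - k)) ^ 2) * θ ^ 2 * W ^ 2 := by
  set e := Real.exp (-β) with he
  have he0 : 0 < e := Real.exp_pos _
  have h1k : 0 < 1 - k := by linarith
  have hek : 0 < e - 2 * k := by linarith
  have hek2 : 0 < e - 2 * k ^ 2 := by nlinarith
  have hμ : μ ≠ 0 := ne_of_gt hμ0
  have h1k' : (1 - k) ≠ 0 := ne_of_gt h1k
  rw [ha, ← sub_nonneg]
  have hQ : 0 ≤ μ ^ 2 * (e - 2 * k ^ 2) * ρJ ^ 2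
      - 2 * μ * θ * ((e - 2 * k) + 2 * μ * k * (1 - k)) * ρJ * W
      + θ ^ 2 * ((e - 2 * k) + 2 * μ ^ 2 * k * (1 - k)) * W ^ 2 := by
    have h2k : (0:ℝ) ≤ 2 * k := by linarith
    have h3 : 0 ≤ μ ^ 2 * θ ^ 2 * (2 * k) * (1 - k) * (e - 2 * k) * (1 - μ) ^ 2 * W ^ 2 :=
      mul_nonneg (mul_nonneg (mul_nonneg (mul_nonneg (mul_nonneg
        (mul_nonneg (sq_nonneg μ) (sq_nonneg θ)) h2k)
        h1k.le) hek.le) (sq_nonneg (1 - μ))) (sq_nonneg W)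
    nlinarith [sq_nonneg (μ ^ 2 * (e - 2 * k ^ 2) * ρJ
        - μ * θ * ((e - 2 * k) + 2 * μ * k * (1 - k)) * W),
      mul_pos (mul_pos hμ0 hμ0) hek2, h3]
  have heq : ((2 - 1 / μ) * (2 * k - e) + 2 * (1 - k) * μ
      + ((2 * k - e) / (1 - k)) ^ 2) * θ ^ 2 * W ^ 2
      - (μ * (2 * (k * ρJ + (1 - k) * θ * W) ^ 2 - e * ρJ ^ 2)
      - 2 * (θ * (2 * k - e) / (1 - k)) * (1 - k) * (ρJ - θ * W) * W
      + (θ * (2 * k - e) / (1 - k)) ^ 2 * W ^ 2)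
      = (μ ^ 2 * (e - 2 * k ^ 2) * ρJ ^ 2
      - 2 * μ * θ * ((e - 2 * k) + 2 * μ * k * (1 - k)) * ρJ * W
      + θ ^ 2 * ((e - 2 * k) + 2 * μ ^ 2 * k * (1 - k)) * W ^ 2) / μ := by
    field_simp
    ring
  rw [heq]
  exact div_nonneg hQ hμ0.le
end

section
/- Let A,B>0, ρ*≥0, θ=ρ*/(B+ρ*), k∈[0,1), J∈ℕ with J≥1, Δx=1/J, x_j=(j−1/2)Δx, Δt>0, and let β>0 satisfy e^{−β}>2k. Set a=θ(2k−e^{−β})/(1−k), K_Δ=Δx·e^{βΔx/2}(e^β−1)/(e^{βΔx}−1), Φ=max{0, (2−e^{βΔx/2})(2k−e^{−β}) + 2(1−k)e^{−βΔx/2} + ((2k−e^{−β})/(1−k))²}, and assume G := βe^{−βΔx} − Φ·K_Δ·θ² > 0. Let ρ_j^n∈ℝ for j∈{0,…,J} and a fixed n, and d^n∈ℝ, satisfy: W^n=Δx·Σ_{j=1}^Jρ_j^n with B+ρ*+W^n>0, λ^n=A/(B+ρ*+W^n), 0 < r^n := λ^nΔt/Δx ≤ 1, the boundary relation ρ_0^n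 = kρ_J^n + (1−k)θW^n + k·d^n, and the upwind update ρ_j^{n+1}=(1−r^n)ρ_j^n + r^nρ_{j−1}^n for j∈{1,…,J}, with W^{n+1}=Δx·Σ_{j=1}^Jρ_j^{n+1}. Define L^m = Δx·Σ_{j=1}^J(ρ_j^m)²e^{−βx_j} + a(W^m)² for m∈{n,n+1}. Then (L^{n+1}−L^n)/Δt ≤ −G·λ^n·L^n + k²(1+2e^{−βΔx/2})·λ^n·(d^n)². -/
/-!
The upwind update is a convex combination, so by convexity of `x ↦ x²` the weighted energy
`S = Σ ρ_j² e^{-βx_j}` grows by at most `r` times `Σ (ρ_{j-1}² - ρ_j²) e^{-βx_j}`. After an index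
shift the interior part of this flux is `(e^{-βΔx} - 1) S ≤ -βΔx e^{-βΔx} S`, and only boundary terms
at `j = 0` and `j = J` survive. The mass changes by exactly `W' - W = rΔx (ρ_0 - ρ_J)`, and since
`a ≤ 0` the term `a W²` grows by at most its linearisation. Inserting the feedback law for `ρ_0`,
the boundary terms form a quadratic form in `(ρ_J, θW, d)` which, after completing squares, is at
most `Φ θ²W² + k²(1 + 2e^{-βΔx/2}) d²`. Finally the weighted Cauchy–Schwarz inequality
`W² ≤ K Δx S` lets the dissipation `βe^{-βΔx} Δx S` absorb `Φ θ²W²`, leaving `-G L`.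
-/

open Real Finset

theorem Finset.sum_Icc_one_sub_one {M : Type*} [AddCommGroup M] (f : ℕ → M) (n : ℕ) :
    ∑ j ∈ Icc 1 n, f (j - 1) = f 0 + ∑ j ∈ Icc 1 n, f j - f n := by
  induction n with
  | zero => simp
  | succ n ih =>
    rw [sum_Icc_succ_top (by omega), sum_Icc_succ_top (by omega), ih, Nat.add_sub_cancel]
    abel

theorem Finset.sq_sum_le_sum_sq_mul_mul_sum_inv {ι R : Type*} [Field R] [LinearOrder R]
    [IsStrictOrderedRing R] (s : Finset ι) (f w : ι → R)
    (hw : ∀ i ∈ s, 0 < w i) :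
    (∑ i ∈ s, f i) ^ 2 ≤ (∑ i ∈ s, f i ^ 2 * w i) * ∑ i ∈ s, (w i)⁻¹ :=
  sum_sq_le_sum_mul_sum_of_sq_le_mul s
    (fun i hi => mul_nonneg (sq_nonneg _) (hw i hi).le) (fun i hi => (inv_pos.2 (hw i hi)).le)
    (fun i hi => by rw [mul_assoc, mul_inv_cancel₀ (hw i hi).ne', mul_one])

theorem sq_convex_comb_le {𝕜 : Type*} [Field 𝕜] [LinearOrder 𝕜] [IsStrictOrderedRing 𝕜] {r : 𝕜}
    (x y : 𝕜) (h0 : 0 ≤ r) (h1 : r ≤ 1) :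
    ((1 - r) * x + r * y) ^ 2 ≤ (1 - r) * x ^ 2 + r * y ^ 2 :=
  (even_two.convexOn_pow (𝕜 := 𝕜)).2 trivial trivial (sub_nonneg.2 h1) h0 (by ring)

theorem mul_exp_neg_le_one_sub_exp_neg (x : ℝ) : x * exp (-x) ≤ 1 - exp (-x) := by
  have := mul_le_mul_of_nonneg_right (add_one_le_exp x) (exp_pos (-x)).le
  rw [← exp_add, add_neg_cancel, exp_zero] at this
  linarith

section Upwind

variable {J : ℕ} {r : ℝ} {ρ ρ' : ℕ → ℝ}

theorem upwind_sum_eq (hupd : ∀ j ∈ Icc 1 J, ρ' j = (1 - r) * ρ j + r * ρ (j - 1)) :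
    ∑ j ∈ Icc 1 J, ρ' j = ∑ j ∈ Icc 1 J, ρ j + r * (ρ 0 - ρ J) := by
  rw [sum_congr rfl hupd, sum_add_distrib, ← mul_sum, ← mul_sum, sum_Icc_one_sub_one]
  ring

theorem upwind_sum_sq_mul_le (w : ℕ → ℝ) (hw : ∀ j ∈ Icc 1 J, 0 ≤ w j) (hr0 : 0 ≤ r)
    (hr1 : r ≤ 1) (hupd : ∀ j ∈ Icc 1 J, ρ' j = (1 - r) * ρ j + r * ρ (j - 1)) :
    ∑ j ∈ Icc 1 J, ρ' j ^ 2 * w j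
      ≤ (1 - r) * ∑ j ∈ Icc 1 J, ρ j ^ 2 * w j + r * ∑ j ∈ Icc 1 J, ρ (j - 1) ^ 2 * w j := by
  rw [mul_sum, mul_sum, ← sum_add_distrib]
  gcongr with j hj
  calc ρ' j ^ 2 * w j ≤ ((1 - r) * ρ j ^ 2 + r * ρ (j - 1) ^ 2) * w j := by
        rw [hupd j hj]; gcongr; exacts [hw j hj, sq_convex_comb_le _ _ hr0 hr1]
    _ = _ := by ring

end Upwind

noncomputable def expWeight (β Δx : ℝ) (j : ℕ) : ℝ := exp (-β * ((j - 1 / 2) * Δx))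

section ExpWeight

variable (β Δx : ℝ)

theorem expWeight_pos (j : ℕ) : 0 < expWeight β Δx j := exp_pos _

theorem expWeight_succ (j : ℕ) :
    expWeight β Δx (j + 1) = exp (-β * Δx) * expWeight β Δx j := by
  rw [expWeight, expWeight, ← exp_add]; push_cast; ring_nf

theorem expWeight_one : expWeight β Δx 1 = exp (-β * Δx / 2) := by
  rw [expWeight]; norm_num; ring_nf

theorem expWeight_succ_of_mul_eq_one {J : ℕ} (hJ : J * Δx = 1) :
    expWeight β Δx (J + 1) = exp (-β) * exp (-β * Δx / 2) := by
  rw [expWeight, ← exp_add]; congr 1; push_cast; linear_combination (-β) * hJ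

theorem sum_Icc_inv_expWeight (hβΔx : β * Δx ≠ 0) (J : ℕ) :
    ∑ j ∈ Icc 1 J, (expWeight β Δx j)⁻¹
      = exp (β * Δx / 2) * (exp (β * Δx * J) - 1) / (exp (β * Δx) - 1) := by
  have hq : exp (β * Δx) ≠ 1 := by rwa [Ne, exp_eq_one_iff]
  rw [← Ico_add_one_right_eq_Icc, sum_Ico_eq_sum_range, Nat.add_sub_cancel, mul_div_assoc,
    show exp (β * Δx * J) = exp (β * Δx) ^ J by rw [← exp_nat_mul, mul_comm], ← geom_sum_eq hq,
    mul_sum]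
  refine sum_congr rfl fun i _ => ?_
  rw [expWeight, ← exp_neg, ← exp_nat_mul, ← exp_add]; congr 1; push_cast; ring

variable {β Δx} {J : ℕ}

theorem sum_sq_sub_one_mul_expWeight (hJ : J * Δx = 1) (ρ : ℕ → ℝ) :
    ∑ j ∈ Icc 1 J, ρ (j - 1) ^ 2 * expWeight β Δx j
      = exp (-β * Δx / 2) * ρ 0 ^ 2 + exp (-β * Δx) * ∑ j ∈ Icc 1 J, ρ j ^ 2 * expWeight β Δx j
        - exp (-β) * exp (-β * Δx / 2) * ρ J ^ 2 := by
  have hshift : ∀ j ∈ Icc 1 J, ρ (j - 1) ^ 2 * expWeight β Δx j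
      = ρ (j - 1) ^ 2 * expWeight β Δx (j - 1 + 1) := fun j hj => by
    rw [Nat.sub_add_cancel (mem_Icc.1 hj).1]
  have hstep (j : ℕ) : ρ j ^ 2 * expWeight β Δx (j + 1)
      = exp (-β * Δx) * (ρ j ^ 2 * expWeight β Δx j) := by rw [expWeight_succ]; ring
  rw [sum_congr rfl hshift, sum_Icc_one_sub_one (fun i => ρ i ^ 2 * expWeight β Δx (i + 1)),
    expWeight_one, expWeight_succ_of_mul_eq_one β Δx hJ]
  simp only [hstep, ← mul_sum]
  ring

theorem upwind_sum_sq_mul_expWeight_le {r : ℝ} {ρ ρ' : ℕ → ℝ} (hJ : J * Δx = 1) (hr0 : 0 ≤ r)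
    (hr1 : r ≤ 1) (hupd : ∀ j ∈ Icc 1 J, ρ' j = (1 - r) * ρ j + r * ρ (j - 1)) :
    ∑ j ∈ Icc 1 J, ρ' j ^ 2 * expWeight β Δx j
      ≤ ∑ j ∈ Icc 1 J, ρ j ^ 2 * expWeight β Δx j
        + r * (-(β * Δx * exp (-β * Δx)) * ∑ j ∈ Icc 1 J, ρ j ^ 2 * expWeight β Δx j
          + exp (-β * Δx / 2) * (ρ 0 ^ 2 - exp (-β) * ρ J ^ 2)) := by
  set S := ∑ j ∈ Icc 1 J, ρ j ^ 2 * expWeight β Δx j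
  have hS : 0 ≤ S := sum_nonneg fun j _ => mul_nonneg (sq_nonneg _) (expWeight_pos β Δx j).le
  have hdecay : r * (β * Δx * exp (-β * Δx) * S) ≤ r * ((1 - exp (-β * Δx)) * S) := by
    gcongr; simpa only [neg_mul] using mul_exp_neg_le_one_sub_exp_neg (β * Δx)
  have := upwind_sum_sq_mul_le _ (fun j _ => (expWeight_pos β Δx j).le) hr0 hr1 hupd
  rw [sum_sq_sub_one_mul_expWeight hJ] at this
  linarith

theorem sq_mul_sum_le_expWeight (hβ : β ≠ 0) (hJ : J * Δx = 1) (ρ : ℕ → ℝ) :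
    (Δx * ∑ j ∈ Icc 1 J, ρ j) ^ 2
      ≤ Δx * exp (β * Δx / 2) * (exp β - 1) / (exp (β * Δx) - 1)
        * (Δx * ∑ j ∈ Icc 1 J, ρ j ^ 2 * expWeight β Δx j) := by
  have hΔx : Δx ≠ 0 := by rintro rfl; simp at hJ
  have hK := sum_Icc_inv_expWeight β Δx (mul_ne_zero hβ hΔx) J
  rw [show β * Δx * J = β by linear_combination β * hJ] at hK
  have := sq_sum_le_sum_sq_mul_mul_sum_inv (Icc 1 J) ρ _ fun j _ => expWeight_pos β Δx j
  rw [hK] at this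
  calc (Δx * ∑ j ∈ Icc 1 J, ρ j) ^ 2 = Δx ^ 2 * (∑ j ∈ Icc 1 J, ρ j) ^ 2 := by ring
    _ ≤ Δx ^ 2 * ((∑ j ∈ Icc 1 J, ρ j ^ 2 * expWeight β Δx j)
          * (exp (β * Δx / 2) * (exp β - 1) / (exp (β * Δx) - 1))) := by gcongr
    _ = _ := by ring

end ExpWeight

noncomputable def lyapunov (β Δx a : ℝ) (J : ℕ) (ρ : ℕ → ℝ) : ℝ :=
  Δx * ∑ j ∈ Icc 1 J, ρ j ^ 2 * expWeight β Δx j + a * (Δx * ∑ j ∈ Icc 1 J, ρ j) ^ 2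

theorem lyapunov_upwind_sub_le {β Δx a r : ℝ} {J : ℕ} {ρ ρ' : ℕ → ℝ} (hJ : J * Δx = 1)
    (hΔx : 0 ≤ Δx) (ha : a ≤ 0) (hr0 : 0 ≤ r) (hr1 : r ≤ 1)
    (hupd : ∀ j ∈ Icc 1 J, ρ' j = (1 - r) * ρ j + r * ρ (j - 1)) :
    lyapunov β Δx a J ρ' - lyapunov β Δx a J ρ
      ≤ r * Δx * (-(β * Δx * exp (-β * Δx)) * ∑ j ∈ Icc 1 J, ρ j ^ 2 * expWeight β Δx j
        + exp (-β * Δx / 2) * (ρ 0 ^ 2 - exp (-β) * ρ J ^ 2)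
        + 2 * a * (Δx * ∑ j ∈ Icc 1 J, ρ j) * (ρ 0 - ρ J)) := by
  have hS := mul_le_mul_of_nonneg_left
    (upwind_sum_sq_mul_expWeight_le (β := β) hJ hr0 hr1 hupd) hΔx
  have hW := mul_nonpos_of_nonpos_of_nonneg ha (sq_nonneg (r * Δx * (ρ 0 - ρ J)))
  rw [lyapunov, lyapunov, upwind_sum_eq hupd]
  linarith

theorem boundary_flux_le {p k c ν u w d Φ ρ₀ : ℝ} (hp : 0 < p) (hk0 : 0 ≤ k) (hk1 : k < 1)
    (hν : ν ≤ 0) (hνc : ν * (1 - k) = 2 * k - c)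
    (hΦ : (2 - p⁻¹) * (2 * k - c) + 2 * (1 - k) * p + ν ^ 2 ≤ Φ)
    (hρ₀ : ρ₀ = k * u + (1 - k) * w + k * d) :
    p * (ρ₀ ^ 2 - c * u ^ 2) + 2 * ν * w * (ρ₀ - u)
      ≤ Φ * w ^ 2 + k ^ 2 * (1 + 2 * p) * d ^ 2 := by
  have hm : 0 ≤ -(ν * (1 - k)) := neg_nonneg.2 (mul_nonpos_of_nonpos_of_nonneg hν (by linarith))
  have hk : 0 ≤ 2 * p * k * (1 - k) := by have := sub_nonneg.2 hk1.le; positivity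
  have hsos : Φ * w ^ 2 + k ^ 2 * (1 + 2 * p) * d ^ 2
        - (p * (ρ₀ ^ 2 - c * u ^ 2) + 2 * ν * w * (ρ₀ - u))
      = (Φ - ((2 - p⁻¹) * (2 * k - c) + 2 * (1 - k) * p + ν ^ 2)) * w ^ 2
        + -(ν * (1 - k)) * (p * u - w) ^ 2 / p + 2 * p * k * (1 - k) * (u - w) ^ 2
        + p * (k * u + (1 - k) * w - k * d) ^ 2 + (ν * w - k * d) ^ 2 := by
    rw [hρ₀, show c = 2 * k - ν * (1 - k) by linarith]; field_simp; ring
  linarith [mul_nonneg (sub_nonneg.2 hΦ) (sq_nonneg w),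
    div_nonneg (mul_nonneg hm (sq_nonneg (p * u - w))) hp.le, mul_nonneg hk (sq_nonneg (u - w)),
    mul_nonneg hp.le (sq_nonneg (k * u + (1 - k) * w - k * d)), sq_nonneg (ν * w - k * d)]

theorem discrete_lyapunov_one_step_dissipation_general
    (B ρs θ k : ℝ) (J : ℕ) (Δx Δt β a K Φ G : ℝ)
    (hB : 0 < B) (hρs : 0 ≤ ρs) (hθ : θ = ρs / (B + ρs))
    (hk0 : 0 ≤ k) (hk1 : k < 1)
    (hJ : 1 ≤ J) (hΔx : Δx = 1 / (J : ℝ)) (hΔt : 0 < Δt)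
    (hβ : 0 < β) (hkβ : 2 * k < Real.exp (-β))
    (ha : a = θ * (2 * k - Real.exp (-β)) / (1 - k))
    (hK : K = Δx * Real.exp (β * Δx / 2) * (Real.exp β - 1) / (Real.exp (β * Δx) - 1))
    (hΦ : Φ = max 0 ((2 - Real.exp (β * Δx / 2)) * (2 * k - Real.exp (-β))
      + 2 * (1 - k) * Real.exp (-β * Δx / 2)
      + ((2 * k - Real.exp (-β)) / (1 - k)) ^ 2))
    (hG : G = β * Real.exp (-β * Δx) - Φ * K * θ ^ 2) (hGpos : 0 < G)
    (ρ ρ' : ℕ → ℝ) (dn W W' lam r L L' : ℝ)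
    (hW : W = Δx * ∑ j ∈ Finset.Icc 1 J, ρ j)
    (hr : r = lam * Δt / Δx)
    (hr0 : 0 < r) (hr1 : r ≤ 1)
    (hbc : ρ 0 = k * ρ J + (1 - k) * θ * W + k * dn)
    (hupd : ∀ j ∈ Finset.Icc 1 J, ρ' j = (1 - r) * ρ j + r * ρ (j - 1))
    (hW' : W' = Δx * ∑ j ∈ Finset.Icc 1 J, ρ' j)
    (hL : L = Δx * ∑ j ∈ Finset.Icc 1 J,
      (ρ j) ^ 2 * Real.exp (-β * (((j : ℝ) - 1 / 2) * Δx)) + a * W ^ 2)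
    (hL' : L' = Δx * ∑ j ∈ Finset.Icc 1 J,
      (ρ' j) ^ 2 * Real.exp (-β * (((j : ℝ) - 1 / 2) * Δx)) + a * W' ^ 2) :
    (L' - L) / Δt ≤ -G * lam * L + k ^ 2 * (1 + 2 * Real.exp (-β * Δx / 2)) * lam * dn ^ 2 := by
  have hΔx0 : 0 < Δx := by rw [hΔx]; positivity
  have hJΔx : (J : ℝ) * Δx = 1 := by rw [hΔx]; field_simp
  have hθ0 : 0 ≤ θ := hθ ▸ div_nonneg hρs (by positivity)
  set ν := (2 * k - exp (-β)) / (1 - k)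
  have hν0 : ν ≤ 0 := div_nonpos_of_nonpos_of_nonneg (by linarith) (by linarith)
  replace ha : a = θ * ν := by rw [ha, mul_div_assoc]
  have ha0 : a ≤ 0 := ha ▸ mul_nonpos_of_nonneg_of_nonpos hθ0 hν0
  have hLρ : L = lyapunov β Δx a J ρ := by rw [hL, hW]; rfl
  have hstep := lyapunov_upwind_sub_le (β := β) hJΔx hΔx0.le ha0 hr0.le hr1 hupd
  rw [← hLρ, show lyapunov β Δx a J ρ' = L' by rw [hL', hW']; rfl, ← hW] at hstep
  have hCS : W ^ 2 ≤ K * (Δx * ∑ j ∈ Icc 1 J, ρ j ^ 2 * expWeight β Δx j) := by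
    rw [hW, hK]; exact sq_mul_sum_le_expWeight hβ.ne' hJΔx ρ
  have hbd := boundary_flux_le (ρ₀ := ρ 0) (u := ρ J) (w := θ * W) (d := dn) (Φ := Φ)
    (exp_pos (-β * Δx / 2)) hk0 hk1 hν0 (div_mul_cancel₀ _ (sub_ne_zero.2 hk1.ne'))
    (by rw [hΦ, ← exp_neg, show -(-β * Δx / 2) = β * Δx / 2 by ring]; exact le_max_right _ _)
    (by rw [hbc]; ring)
  rw [div_le_iff₀ hΔt, show (-G * lam * L + k ^ 2 * (1 + 2 * exp (-β * Δx / 2)) * lam * dn ^ 2) * Δt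
    = r * Δx * (-G * L + k ^ 2 * (1 + 2 * exp (-β * Δx / 2)) * dn ^ 2) by rw [hr]; field_simp]
  refine hstep.trans (mul_le_mul_of_nonneg_left ?_ (by positivity))
  have hCS' := mul_le_mul_of_nonneg_left hCS (mul_nonneg (hΦ ▸ le_max_left _ _) (sq_nonneg θ))
  have haW := mul_nonpos_of_nonneg_of_nonpos hGpos.le
    (mul_nonpos_of_nonpos_of_nonneg ha0 (sq_nonneg W))
  rw [hLρ, lyapunov, ← hW, hG, ha]
  rw [hG, ha] at haW
  linarith

/-- One-step dissipation estimate for the discrete ISS-Lyapunov function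
along the upwind scheme. -/
theorem discrete_lyapunov_one_step_dissipation
    (A B ρs θ k : ℝ) (J : ℕ) (Δx Δt β a K Φ G : ℝ)
    (hA : 0 < A) (hB : 0 < B) (hρs : 0 ≤ ρs) (hθ : θ = ρs / (B + ρs))
    (hk0 : 0 ≤ k) (hk1 : k < 1)
    (hJ : 1 ≤ J) (hΔx : Δx = 1 / (J : ℝ)) (hΔt : 0 < Δt)
    (hβ : 0 < β) (hkβ : 2 * k < Real.exp (-β))
    (ha : a = θ * (2 * k - Real.exp (-β)) / (1 - k))
    (hK : K = Δx * Real.exp (β * Δx / 2) * (Real.exp β - 1) / (Real.exp (β * Δx) - 1))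
    (hΦ : Φ = max 0 ((2 - Real.exp (β * Δx / 2)) * (2 * k - Real.exp (-β))
      + 2 * (1 - k) * Real.exp (-β * Δx / 2)
      + ((2 * k - Real.exp (-β)) / (1 - k)) ^ 2))
    (hG : G = β * Real.exp (-β * Δx) - Φ * K * θ ^ 2) (hGpos : 0 < G)
    (ρ ρ' : ℕ → ℝ) (dn W W' lam r L L' : ℝ)
    (hW : W = Δx * ∑ j ∈ Finset.Icc 1 J, ρ j) (hWpos : 0 < B + ρs + W)
    (hlam : lam = A / (B + ρs + W)) (hr : r = lam * Δt / Δx)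
    (hr0 : 0 < r) (hr1 : r ≤ 1)
    (hbc : ρ 0 = k * ρ J + (1 - k) * θ * W + k * dn)
    (hupd : ∀ j ∈ Finset.Icc 1 J, ρ' j = (1 - r) * ρ j + r * ρ (j - 1))
    (hW' : W' = Δx * ∑ j ∈ Finset.Icc 1 J, ρ' j)
    (hL : L = Δx * ∑ j ∈ Finset.Icc 1 J,
      (ρ j) ^ 2 * Real.exp (-β * (((j : ℝ) - 1 / 2) * Δx)) + a * W ^ 2)
    (hL' : L' = Δx * ∑ j ∈ Finset.Icc 1 J,
      (ρ' j) ^ 2 * Real.exp (-β * (((j : ℝ) - 1 / 2) * Δx)) + a * W' ^ 2) :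
    (L' - L) / Δt ≤ -G * lam * L + k ^ 2 * (1 + 2 * Real.exp (-β * Δx / 2)) * lam * dn ^ 2 :=
  discrete_lyapunov_one_step_dissipation_general B ρs θ k J Δx Δt β a K Φ G hB hρs hθ hk0 hk1 hJ hΔx
    hΔt hβ hkβ ha hK hΦ hG hGpos ρ ρ' dn W W' lam r L L' hW hr hr0 hr1 hbc hupd hW' hL hL'
end

section
/- Let Δt>0, c>0, K≥0, 0<σ≤δ, and let (L^n)_{n≥0}, (λ^n)_{n≥0}, (d^n)_{n≥0} be real sequences with L^n≥0, σ≤λ^n≤δ and Δt·c·λ^n ≤ 1 for all n. If L^{n+1} ≤ (1−Δt·c·λ^n)·L^n + Δt·K·λ^n·(d^n)² for all n≥0, then for every n≥1: L^n ≤ e^{−σc·nΔt}·L^0 + (Kδ/(σc))·max_{0≤s<n}(d^s)². -/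
open Real Finset

/-- Uniform-in-time exponential ISS bound from the one-step dissipation
inequality. -/
theorem discrete_gronwall_iss_bound
    (Δt c K σ δ : ℝ) (hΔt : 0 < Δt) (hc : 0 < c) (hK : 0 ≤ K)
    (hσ : 0 < σ) (hσδ : σ ≤ δ)
    (L lam d : ℕ → ℝ)
    (hL : ∀ n, 0 ≤ L n) (hlam : ∀ n, σ ≤ lam n ∧ lam n ≤ δ)
    (hcfl : ∀ n, Δt * c * lam n ≤ 1)
    (hrec : ∀ n, L (n + 1) ≤ (1 - Δt * c * lam n) * L n + Δt * K * lam n * (d n) ^ 2) :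
    ∀ n : ℕ, ∀ hn : 1 ≤ n,
      L n ≤ Real.exp (-σ * c * (n : ℝ) * Δt) * L 0 +
        (K * δ / (σ * c)) * (Finset.range n).sup'
          (Finset.nonempty_range_iff.mpr (by omega)) (fun s => (d s) ^ 2) := by
  have hδ : 0 < δ := lt_of_lt_of_le hσ hσδ
  have hKδ : 0 ≤ K * δ := mul_nonneg hK hδ.le
  have hσc : 0 < σ * c := mul_pos hσ hc
  set C : ℝ := K * δ / (σ * c) with hCdef
  have hC : 0 ≤ C := div_nonneg hKδ hσc.le
  have hcfl' : Δt * c * σ ≤ 1 := by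
    have h0 := hcfl 0
    have h1 := (hlam 0).1
    nlinarith [mul_nonneg hΔt.le hc.le]
  have h1m : 0 ≤ 1 - Δt * c * σ := by linarith
  set Ee : ℝ := Real.exp (-(σ * c * Δt)) with hEe
  have hEpos : 0 < Ee := Real.exp_pos _
  have hexp1 : 1 - Δt * c * σ ≤ Ee := by
    have h := Real.add_one_le_exp (-(σ * c * Δt))
    nlinarith [h]
  have hac : (Δt * c * σ) * C = Δt * (K * δ) := by
    rw [hCdef]; field_simp
  have key : ∀ m, L (m + 1) ≤ (1 - Δt * c * σ) * L m + Δt * (K * δ) * (d m) ^ 2 := by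
    intro m
    have h := hrec m
    have hl1 := (hlam m).1
    have hl2 := (hlam m).2
    have hLm := hL m
    have hd : (0:ℝ) ≤ (d m) ^ 2 := sq_nonneg _
    nlinarith [mul_nonneg (mul_nonneg (mul_nonneg hΔt.le hc.le) (sub_nonneg.2 hl1)) hLm,
      mul_nonneg (mul_nonneg (mul_nonneg hΔt.le hK) (sub_nonneg.2 hl2)) hd]
  have main : ∀ k : ℕ, L (k + 1) ≤ Ee ^ (k + 1) * L 0 +
      C * (Finset.range (k + 1)).sup'
        (Finset.nonempty_range_iff.mpr (Nat.succ_ne_zero k)) (fun s => (d s) ^ 2) := by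
    intro k
    induction k with
    | zero =>
      have hkey := key 0
      have hd0 : (d 0) ^ 2 ≤ (Finset.range 1).sup'
          (Finset.nonempty_range_iff.mpr (Nat.succ_ne_zero 0)) (fun s => (d s) ^ 2) :=
        Finset.le_sup' (fun s => (d s) ^ 2) (Finset.mem_range.mpr Nat.one_pos)
      have s1 : (1 - Δt * c * σ) * L 0 ≤ Ee * L 0 :=
        mul_le_mul_of_nonneg_right hexp1 (hL 0)
      have s2 : Δt * (K * δ) ≤ C := by
        rw [hCdef, le_div_iff₀ hσc]
        nlinarith
      have s3 : Δt * (K * δ) * (d 0) ^ 2 ≤ C * (d 0) ^ 2 :=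
        mul_le_mul_of_nonneg_right s2 (sq_nonneg _)
      have s4 := mul_le_mul_of_nonneg_left hd0 hC
      have hp : Ee ^ (0 + 1) = Ee := pow_one Ee
      rw [hp]
      linarith
    | succ m ih =>
      have hne : (Finset.range (m + 1)).Nonempty :=
        Finset.nonempty_range_iff.mpr (Nat.succ_ne_zero m)
      have hne' : (Finset.range (m + 1 + 1)).Nonempty :=
        Finset.nonempty_range_iff.mpr (Nat.succ_ne_zero (m + 1))
      set M : ℝ := (Finset.range (m + 1)).sup' hne (fun s => (d s) ^ 2) with hMdef
      set M' : ℝ := (Finset.range (m + 1 + 1)).sup' hne' (fun s => (d s) ^ 2) with hM'def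
      have hMmono : M ≤ M' := by
        apply Finset.sup'_le
        intro s hs
        exact Finset.le_sup' (fun s => (d s) ^ 2)
          (Finset.mem_range.mpr (lt_trans (Finset.mem_range.mp hs) (Nat.lt_succ_self _)))
      have hdm : (d (m + 1)) ^ 2 ≤ M' :=
        Finset.le_sup' (fun s => (d s) ^ 2) (Finset.mem_range.mpr (Nat.lt_succ_self _))
      have hM'0 : 0 ≤ M' := le_trans (sq_nonneg _) hdm
      have hEk : (0:ℝ) ≤ Ee ^ (m + 1) := le_of_lt (pow_pos hEpos _)
      have hkey := key (m + 1)
      have hmul : (1 - Δt * c * σ) * L (m + 1)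
          ≤ (1 - Δt * c * σ) * (Ee ^ (m + 1) * L 0 + C * M) :=
        mul_le_mul_of_nonneg_left ih h1m
      have s1 : (1 - Δt * c * σ) * (Ee ^ (m + 1) * L 0)
          ≤ Ee * (Ee ^ (m + 1) * L 0) :=
        mul_le_mul_of_nonneg_right hexp1 (mul_nonneg hEk (hL 0))
      have s2 : ((1 - Δt * c * σ) * C) * M ≤ ((1 - Δt * c * σ) * C) * M' :=
        mul_le_mul_of_nonneg_left hMmono (mul_nonneg h1m hC)
      have s3 : (Δt * (K * δ)) * (d (m + 1)) ^ 2 ≤ (Δt * (K * δ)) * M' :=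
        mul_le_mul_of_nonneg_left hdm (mul_nonneg hΔt.le hKδ)
      have s4 : ((1 - Δt * c * σ) * C) * M' + (Δt * (K * δ)) * M' = C * M' := by
        rw [← hac]; ring
      have hp : Ee ^ (m + 1 + 1) = Ee * Ee ^ (m + 1) := by ring
      rw [hp]
      nlinarith [hkey, hmul, s1, s2, s3, s4]
  intro n hn
  obtain ⟨k, rfl⟩ : ∃ k, n = k + 1 := ⟨n - 1, by omega⟩
  have hEeq : Real.exp (-σ * c * ((k + 1 : ℕ) : ℝ) * Δt) = Ee ^ (k + 1) := by
    rw [hEe, ← Real.exp_nat_mul]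
    congr 1
    push_cast; ring
  rw [hEeq]
  exact main k
end

section
/- Let A,B>0, ρ*≥0, k∈[0,1], J∈ℕ with J≥1, Δx=1/J, Δt>0 with A·Δt ≤ B·Δx, λ(s)=A/(B+s), and let (d^n)_{n≥1} satisfy d^n≥0 for all n. Define sequences ρ_j^n for j∈{0,…,J}, n≥0 by: given initial data ρ_j^0≥0 for all j∈{0,…,J}, set W^n=Δx·Σ_{j=1}^Jρ_j^n, λ^n=A/(B+W^n), r^n=λ^nΔt/Δx, and ρ_j^{n+1}=(1−r^n)ρ_j^n+r^nρ_{j−1}^n for j∈{1,…,J}, together with ρ_0^{n+1}=kρ_J^{n+1}+(1−k)ρ*λ(ρ*)/λ^{n+1}+k·d^{n+1}. Then for all n≥0: W^n ≥ 0, the CFL condition 0 < r^n ≤ 1 holds, and ρ_j^n ≥ 0 for all j∈{0,…,J}. -/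
open Real Finset

/-- The upwind scheme for the closed-loop nonlocal conservation law preserves
nonnegativity and satisfies the CFL condition under the time-step
restriction `A·Δt ≤ B·Δx`. -/
theorem upwind_scheme_nonnegativity
    (A B ρs k : ℝ) (J : ℕ) (Δx Δt : ℝ)
    (hA : 0 < A) (hB : 0 < B) (hρs : 0 ≤ ρs) (hk0 : 0 ≤ k) (hk1 : k ≤ 1)
    (hJ : 1 ≤ J) (hΔx : Δx = 1 / (J : ℝ)) (hΔt : 0 < Δt)
    (hcfl : A * Δt ≤ B * Δx)
    (d : ℕ → ℝ) (hd : ∀ n, 1 ≤ n → 0 ≤ d n)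
    (ρ : ℕ → ℕ → ℝ) (W lam r : ℕ → ℝ)
    (hinit : ∀ j ≤ J, 0 ≤ ρ 0 j)
    (hW : ∀ n, W n = Δx * ∑ j ∈ Finset.Icc 1 J, ρ n j)
    (hlam : ∀ n, lam n = A / (B + W n))
    (hr : ∀ n, r n = lam n * Δt / Δx)
    (hupd : ∀ n, ∀ j ∈ Finset.Icc 1 J,
      ρ (n + 1) j = (1 - r n) * ρ n j + r n * ρ n (j - 1))
    (hbc : ∀ n, ρ (n + 1) 0 =
      k * ρ (n + 1) J + (1 - k) * ρs * (A / (B + ρs)) / lam (n + 1) + k * d (n + 1)) :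
    ∀ n : ℕ, 0 ≤ W n ∧ (0 < r n ∧ r n ≤ 1) ∧ ∀ j ≤ J, 0 ≤ ρ n j := by
  have hJ0 : (0:ℝ) < J := by exact_mod_cast Nat.lt_of_lt_of_le Nat.zero_lt_one hJ
  have hΔx0 : 0 < Δx := by rw [hΔx]; positivity
  have Wnn : ∀ n, (∀ j ≤ J, 0 ≤ ρ n j) → 0 ≤ W n := by
    intro n h
    rw [hW n]
    exact mul_nonneg hΔx0.le (Finset.sum_nonneg fun j hj => h j (Finset.mem_Icc.mp hj).2)
  have rbnd : ∀ n, 0 ≤ W n → 0 < r n ∧ r n ≤ 1 := by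
    intro n hWn
    have hBW : 0 < B + W n := by linarith
    have hlamn : 0 < lam n := by rw [hlam n]; exact div_pos hA hBW
    constructor
    · rw [hr n]; positivity
    · rw [hr n, hlam n, div_mul_eq_mul_div, div_div, div_le_one (by positivity)]
      calc A * Δt ≤ B * Δx := hcfl
        _ ≤ (B + W n) * Δx := by nlinarith
  have key : ∀ n, ∀ j ≤ J, 0 ≤ ρ n j := by
    intro n
    induction n with
    | zero => exact hinit
    | succ n ih =>
      have hWn := Wnn n ih
      obtain ⟨hrn0, hrn1⟩ := rbnd n hWn
      have hpos : ∀ j ∈ Finset.Icc 1 J, 0 ≤ ρ (n+1) j := by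
        intro j hj
        obtain ⟨h1, h2⟩ := Finset.mem_Icc.mp hj
        rw [hupd n j hj]
        have ha := ih j h2
        have hb := ih (j-1) (le_trans (Nat.sub_le j 1) h2)
        nlinarith
      intro j hjJ
      rcases Nat.eq_zero_or_pos j with h0 | h1
      · subst h0
        have hW1 : 0 ≤ W (n+1) := by
          rw [hW]
          exact mul_nonneg hΔx0.le (Finset.sum_nonneg hpos)
        have hlam1 : 0 < lam (n+1) := by
          rw [hlam]; exact div_pos hA (by linarith)
        rw [hbc n]
        have h1 := hpos J (Finset.mem_Icc.mpr ⟨hJ, le_refl J⟩)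
        have h2 := hd (n+1) (by omega)
        have h3 : 0 ≤ (1-k) * ρs * (A / (B + ρs)) / lam (n+1) := by
          apply div_nonneg _ hlam1.le
          apply mul_nonneg (mul_nonneg (by linarith) hρs)
          exact le_of_lt (div_pos hA (by linarith))
        nlinarith
      · exact hpos j (Finset.mem_Icc.mpr ⟨h1, hjJ⟩)
  intro n
  have hρ := key n
  have hWn := Wnn n hρ
  exact ⟨hWn, rbnd n hWn, hρ⟩
end

section
/- Let J∈ℕ with J≥1, Δx=1/J, x_j=(j−1/2)Δx for j=0,…,J (so x_0=−Δx/2 and x_J=1−Δx/2), let β>0 and r∈[0,1]. Then for all real numbers ρ_0,ρ_1,…,ρ_J: Σ_{j=1}^J ((1−r)ρ_j + rρ_{j−1})² e^{−βx_j} ≤ (1 + r(e^{−βΔx}−1))·Σ_{j=1}^J ρ_j² e^{−βx_j} + r·e^{−βΔx/2}·(ρ_0² − e^{−β}ρ_J²). -/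
open Real Finset

/-- Weighted summation estimate for one step of the explicit upwind scheme. -/
theorem upwind_weighted_sum_estimate
    (J : ℕ) (hJ : 1 ≤ J) (Δx : ℝ) (hΔx : Δx = 1 / (J : ℝ))
    (β r : ℝ) (hβ : 0 < β) (hr0 : 0 ≤ r) (hr1 : r ≤ 1) (ρ : ℕ → ℝ) :
    ∑ j ∈ Finset.Icc 1 J,
        ((1 - r) * ρ j + r * ρ (j - 1)) ^ 2 * Real.exp (-β * (((j : ℝ) - 1 / 2) * Δx)) ≤
      (1 + r * (Real.exp (-β * Δx) - 1)) *
        ∑ j ∈ Finset.Icc 1 J, (ρ j) ^ 2 * Real.exp (-β * (((j : ℝ) - 1 / 2) * Δx))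
      + r * Real.exp (-β * Δx / 2) * ((ρ 0) ^ 2 - Real.exp (-β) * (ρ J) ^ 2) := by
  have hJ0 : (J : ℝ) ≠ 0 := Nat.cast_ne_zero.mpr (by omega)
  have hJΔ : (J : ℝ) * Δx = 1 := by rw [hΔx]; field_simp
  set w : ℕ → ℝ := fun j => Real.exp (-β * (((j : ℝ) - 1 / 2) * Δx)) with hw
  set f : ℕ → ℝ := fun j => (ρ j) ^ 2 * w j with hf
  -- Step 1: convexity
  have step1 : ∑ j ∈ Finset.Icc 1 J, ((1 - r) * ρ j + r * ρ (j - 1)) ^ 2 * w j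
      ≤ ∑ j ∈ Finset.Icc 1 J, ((1 - r) * (ρ j) ^ 2 + r * (ρ (j - 1)) ^ 2) * w j := by
    apply Finset.sum_le_sum
    intro j _
    apply mul_le_mul_of_nonneg_right _ (Real.exp_pos _).le
    nlinarith [mul_nonneg (mul_nonneg hr0 (sub_nonneg.2 hr1)) (sq_nonneg (ρ j - ρ (j - 1)))]
  -- Step 2: split
  have step2 : ∑ j ∈ Finset.Icc 1 J, ((1 - r) * (ρ j) ^ 2 + r * (ρ (j - 1)) ^ 2) * w j
      = (1 - r) * ∑ j ∈ Finset.Icc 1 J, f j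
        + r * ∑ j ∈ Finset.Icc 1 J, (ρ (j - 1)) ^ 2 * w j := by
    rw [Finset.mul_sum, Finset.mul_sum, ← Finset.sum_add_distrib]
    apply Finset.sum_congr rfl
    intros; simp only [hf]; ring
  -- Step 3: weight shift
  have step3 : ∑ j ∈ Finset.Icc 1 J, (ρ (j - 1)) ^ 2 * w j
      = Real.exp (-β * Δx) * ∑ j ∈ Finset.Icc 1 J, f (j - 1) := by
    rw [Finset.mul_sum]
    apply Finset.sum_congr rfl
    intro j hj
    have hj1 : 1 ≤ j := (Finset.mem_Icc.mp hj).1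
    have hc : ((j - 1 : ℕ) : ℝ) = (j : ℝ) - 1 := by
      push_cast [Nat.cast_sub hj1]; ring
    have he : Real.exp (-β * (((j : ℝ) - 1 / 2) * Δx))
        = Real.exp (-β * Δx) * Real.exp (-β * (((j : ℝ) - 1 - 1 / 2) * Δx)) := by
      rw [← Real.exp_add]; congr 1; ring
    simp only [hf, hw, hc, he]; ring
  -- Step 4: telescope
  have step4 : ∑ j ∈ Finset.Icc 1 J, f (j - 1)
      = ∑ j ∈ Finset.Icc 1 J, f j + f 0 - f J := by
    obtain ⟨K, rfl⟩ := Nat.exists_eq_add_of_le hJ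
    have hIco : Finset.Icc 1 (1 + K) = Finset.Ico 1 (1 + K + 1) := by
      rw [Finset.Ico_add_one_right_eq_Icc]
    have h1 : ∑ j ∈ Finset.Icc 1 (1 + K), f (j - 1) = ∑ i ∈ Finset.range (1 + K), f i := by
      rw [hIco, Finset.sum_Ico_eq_sum_range]
      simp
    have h2 : ∑ j ∈ Finset.Icc 1 (1 + K), f j = ∑ i ∈ Finset.range (1 + K), f (i + 1) := by
      rw [hIco, Finset.sum_Ico_eq_sum_range]
      apply Finset.sum_congr (by simp) (fun i _ => by rw [Nat.add_comm 1 i])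
    rw [h1, h2, Nat.add_comm 1 K, Finset.sum_range_succ' f K, Finset.sum_range_succ (fun i => f (i + 1)) K]
    ring
  -- boundary exponentials
  have hb0 : Real.exp (-β * Δx) * f 0 = Real.exp (-β * Δx / 2) * (ρ 0) ^ 2 := by
    simp only [hf, hw]
    rw [show ((0 : ℕ) : ℝ) = 0 by norm_num]
    rw [mul_comm ((ρ 0)^2) _, ← mul_assoc, ← Real.exp_add]
    ring_nf
  have hbJ : Real.exp (-β * Δx) * f J = Real.exp (-β * Δx / 2) * (Real.exp (-β) * (ρ J) ^ 2) := by
    simp only [hf, hw]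
    rw [mul_comm ((ρ J)^2) _, ← mul_assoc, ← Real.exp_add,
      show Real.exp (-β * Δx / 2) * (Real.exp (-β) * (ρ J)^2)
        = Real.exp (-β * Δx / 2 + -β) * (ρ J)^2 from by rw [Real.exp_add]; ring]
    congr 2
    linear_combination (-β) * hJΔ
  calc ∑ j ∈ Finset.Icc 1 J, ((1 - r) * ρ j + r * ρ (j - 1)) ^ 2 * w j
      ≤ ∑ j ∈ Finset.Icc 1 J, ((1 - r) * (ρ j) ^ 2 + r * (ρ (j - 1)) ^ 2) * w j := step1
    _ = (1 - r) * ∑ j ∈ Finset.Icc 1 J, f j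
        + r * (Real.exp (-β * Δx) * (∑ j ∈ Finset.Icc 1 J, f j + f 0 - f J)) := by
        rw [step2, step3, step4]
    _ = (1 + r * (Real.exp (-β * Δx) - 1)) * ∑ j ∈ Finset.Icc 1 J, f j
        + r * (Real.exp (-β * Δx) * f 0 - Real.exp (-β * Δx) * f J) := by ring
    _ = (1 + r * (Real.exp (-β * Δx) - 1)) * ∑ j ∈ Finset.Icc 1 J, f j
        + r * Real.exp (-β * Δx / 2) * ((ρ 0) ^ 2 - Real.exp (-β) * (ρ J) ^ 2) := by
        rw [hb0, hbJ]; ring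
end
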